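/- arXiv:2303.16413 — 8 statements merged into one kernel-verified Lean document; each statement's English description precedes it below -/
import Mathlib

section
/- Let B be an ordered branching program of length n and width w, let G : {0,1}^s → {0,1}^n be any function, and let ε ≥ 0. If for every i < n we have ∑_{v∈V_i} |E_G[N_v]| ≤ ε, then G (ε·n)-fools B, i.e. |E[B] − E_G[B]| ≤ ε·n. -/
open Finset
open scoped Classical

/-- An ordered branching program of length `n` and width `w`: each layer's states
are identified with `Fin w`; `next i v b` is the successor of state `v` in layer `i`
on bit `b`; states in the last layer are labeled by `label`. -/
structure OBP (n w : ℕ) where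
  start : Fin w
  next : ℕ → Fin w → Bool → Fin w
  label : Fin w → Bool

namespace OBP

/-- The state reached from state `v` in layer `i` after reading `k` bits. -/
def walk {n w : ℕ} (B : OBP n w) : (k : ℕ) → (i : ℕ) → Fin w → (Fin k → Bool) → Fin w
  | 0, _, v, _ => v
  | k + 1, i, v, x => walk B k (i + 1) (B.next i v (x 0)) (fun j => x j.succ)

/-- The state in layer `i` reached from the start state on a length-`i` input. -/
def reach {n w : ℕ} (B : OBP n w) {i : ℕ} (x : Fin i → Bool) : Fin w :=
  B.walk i 0 B.start x

/-- The boolean output of the program on an `n`-bit input. -/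
def eval {n w : ℕ} (B : OBP n w) (x : Fin n → Bool) : Bool :=
  B.label (B.reach x)

end OBP

/-- Expectation of a real-valued function under the uniform distribution. -/
noncomputable def Exp {α : Type*} [Fintype α] (f : α → ℝ) : ℝ :=
  (∑ a, f a) / (Fintype.card α : ℝ)

/-- Probability of an event under the uniform distribution. -/
noncomputable def prob {α : Type*} [Fintype α] (p : α → Prop) : ℝ :=
  ((Finset.univ.filter p).card : ℝ) / (Fintype.card α : ℝ)

/-- A boolean viewed as a real number. -/
def bval (b : Bool) : ℝ := if b then 1 else 0

/-- The first `k` bits of `x` (padded with `false` if `k > n`). -/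
def bits {n : ℕ} (x : Fin n → Bool) (k : ℕ) : Fin k → Bool :=
  fun j => if h : (j : ℕ) < n then x ⟨j, h⟩ else false

/-- The pseudo-expectation `E_G[f]` of `f : {0,1}^i → ℝ` under the generator `G`,
where `f` is fed the length-`i` prefix of the output of `G`. -/
noncomputable def ExpG {s n : ℕ} (G : (Fin s → Bool) → Fin n → Bool) (i : ℕ)
    (f : (Fin i → Bool) → ℝ) : ℝ :=
  Exp (fun y => f (bits (G y) i))

/-- The indicator `B_{→v}` of reaching state `v` in layer `i`. -/
def reachInd {n w : ℕ} (B : OBP n w) {i : ℕ} (v : Fin w) (x : Fin i → Bool) : ℝ :=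
  if B.reach x = v then 1 else 0

/-- The next-bit bias function `N_v` for a state `v` in layer `i`. -/
def Nv {n w : ℕ} (B : OBP n w) {i : ℕ} (v : Fin w) (x : Fin (i + 1) → Bool) : ℝ :=
  if B.reach (fun j : Fin i => x j.castSucc) = v then
    (if x (Fin.last i) then 1 else -1)
  else 0

/-!
Hybrid argument. Let `hybrid B G i` be the acceptance probability when the first `i` bits come
from `G` and the remaining `n - i` bits are uniform, so it is `E[B]` at `i = 0` and `E_G[B]` at
`i = n`. Passing from `i` to `i + 1` only changes the distribution of bit `i + 1`; writing `q v b`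
for the acceptance probability from `B[v, b]` on uniform remaining bits, the change is
`∑ v, E_G[N_v] · (q v 1 - q v 0) / 2`, which is at most `∑ v, |E_G[N_v]| ≤ ε` in absolute value.
Summing over the `n` steps gives `ε n`.
-/

section Exp

variable {α : Type*} [Fintype α]

lemma Exp_const [Nonempty α] (c : ℝ) : Exp (fun _ : α => c) = c := by
  simp [Exp]

lemma Exp_sub (f g : α → ℝ) : Exp (fun a => f a - g a) = Exp f - Exp g := by
  simp [Exp, Finset.sum_sub_distrib, sub_div]

lemma Exp_sum {β : Type*} [Fintype β] (F : β → α → ℝ) :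
    Exp (fun a => ∑ v, F v a) = ∑ v, Exp (F v) := by
  simp only [Exp, ← Finset.sum_div]
  rw [Finset.sum_comm]

lemma Exp_mul_const (f : α → ℝ) (c : ℝ) : Exp (fun a => f a * c) = Exp f * c := by
  simp [Exp, ← Finset.sum_mul, mul_div_right_comm]

lemma Exp_fin_succ {k : ℕ} (f : (Fin (k + 1) → Bool) → ℝ) :
    Exp f = (Exp (fun z => f (Fin.cons false z)) + Exp (fun z => f (Fin.cons true z))) / 2 := by
  have hsum : ∑ x, f x = ∑ p : Bool × (Fin k → Bool), f (Fin.cons p.1 p.2) :=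
    (Equiv.sum_comp (Fin.consEquiv fun _ => Bool) f).symm
  have hcard : (Fintype.card (Fin (k + 1) → Bool) : ℝ) = 2 * Fintype.card (Fin k → Bool) := by
    simp [pow_succ, mul_comm]
  have hpos : (Fintype.card (Fin k → Bool) : ℝ) ≠ 0 := by positivity
  rw [Exp, hsum, Fintype.sum_prod_type, Fintype.sum_bool, hcard, Exp, Exp]
  field_simp
  ring

end Exp

lemma init_bits_succ {n : ℕ} (x : Fin n → Bool) (i : ℕ) :
    Fin.init (bits x (i + 1)) = bits x i := by
  funext j
  simp [bits, Fin.init]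

lemma bits_self {n : ℕ} (x : Fin n → Bool) : bits x n = x := by
  funext j
  simp [bits]

namespace OBP

variable {n w : ℕ} (B : OBP n w)

lemma walk_succ (k i : ℕ) (v : Fin w) (x : Fin (k + 1) → Bool) :
    B.walk (k + 1) i v x = B.next (i + k) (B.walk k i v (Fin.init x)) (x (Fin.last k)) := by
  induction k generalizing i v with
  | zero => simp [walk, Fin.last]
  | succ k ih =>
    rw [walk, ih, show i + 1 + k = i + (k + 1) by omega, Fin.succ_last]
    rfl

lemma reach_zero (x : Fin 0 → Bool) : B.reach x = B.start := rfl

lemma reach_succ {i : ℕ} (x : Fin (i + 1) → Bool) :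
    B.reach x = B.next i (B.reach (Fin.init x)) (x (Fin.last i)) := by
  rw [reach, walk_succ, Nat.zero_add]
  rfl

noncomputable def acceptProb : ℕ → ℕ → Fin w → ℝ
  | 0, _, v => bval (B.label v)
  | k + 1, i, v =>
    (acceptProb k (i + 1) (B.next i v false) + acceptProb k (i + 1) (B.next i v true)) / 2

lemma acceptProb_mem_Icc (k i : ℕ) (v : Fin w) : B.acceptProb k i v ∈ Set.Icc 0 1 := by
  induction k generalizing i v with
  | zero => unfold acceptProb bval; split <;> norm_num
  | succ k ih =>
    obtain ⟨h0, h1⟩ := ih (i + 1) (B.next i v false)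
    obtain ⟨h2, h3⟩ := ih (i + 1) (B.next i v true)
    constructor <;> (simp only [acceptProb]; linarith)

lemma acceptProb_eq_Exp (k i : ℕ) (v : Fin w) :
    B.acceptProb k i v = Exp (fun z : Fin k → Bool => bval (B.label (B.walk k i v z))) := by
  induction k generalizing i v with
  | zero => exact (Exp_const _).symm
  | succ k ih =>
    rw [Exp_fin_succ, acceptProb, ih, ih]
    simp [walk]

noncomputable def nextBitGain (k i : ℕ) (v : Fin w) : ℝ :=
  (B.acceptProb k (i + 1) (B.next i v true) - B.acceptProb k (i + 1) (B.next i v false)) / 2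

lemma abs_nextBitGain_le_one (k i : ℕ) (v : Fin w) : |B.nextBitGain k i v| ≤ 1 := by
  obtain ⟨h0, h1⟩ := B.acceptProb_mem_Icc k (i + 1) (B.next i v true)
  obtain ⟨h2, h3⟩ := B.acceptProb_mem_Icc k (i + 1) (B.next i v false)
  rw [nextBitGain, abs_le]
  constructor <;> linarith

lemma acceptProb_reach_sub_eq_sum_Nv {i : ℕ} (k : ℕ) (x : Fin (i + 1) → Bool) :
    B.acceptProb k (i + 1) (B.reach x) - B.acceptProb (k + 1) i (B.reach (Fin.init x))
      = ∑ v, Nv B v x * B.nextBitGain k i v := by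
  have hinit : (fun j : Fin i => x j.castSucc) = Fin.init x := rfl
  simp only [Nv, hinit, ite_mul, zero_mul, Finset.sum_ite_eq, Finset.mem_univ, if_true]
  rw [acceptProb, B.reach_succ x, nextBitGain]
  cases x (Fin.last i) <;> simp <;> ring

end OBP

section Hybrid

variable {n w s : ℕ} (B : OBP n w) (G : (Fin s → Bool) → Fin n → Bool)

noncomputable def hybrid (i : ℕ) : ℝ :=
  Exp (fun y => B.acceptProb (n - i) i (B.reach (bits (G y) i)))

lemma hybrid_zero : hybrid B G 0 = Exp (fun x : Fin n → Bool => bval (B.eval x)) := by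
  simp only [hybrid, Nat.sub_zero, OBP.reach_zero]
  rw [Exp_const, B.acceptProb_eq_Exp]
  rfl

lemma hybrid_self : hybrid B G n = Exp (fun y => bval (B.eval (G y))) := by
  simp only [hybrid, Nat.sub_self, OBP.acceptProb, bits_self]
  rfl

lemma hybrid_succ_sub {i : ℕ} (hi : i < n) :
    hybrid B G (i + 1) - hybrid B G i
      = ∑ v, ExpG G (i + 1) (Nv B v) * B.nextBitGain (n - (i + 1)) i v := by
  have hni : n - i = n - (i + 1) + 1 := by omega
  simp only [hybrid, ← Exp_sub, hni, ← init_bits_succ _ i, B.acceptProb_reach_sub_eq_sum_Nv,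
    Exp_sum, Exp_mul_const]
  rfl

lemma abs_hybrid_succ_sub_le {i : ℕ} (hi : i < n) :
    |hybrid B G (i + 1) - hybrid B G i| ≤ ∑ v, |ExpG G (i + 1) (Nv B v)| := by
  rw [hybrid_succ_sub B G hi]
  refine (Finset.abs_sum_le_sum_abs _ _).trans (Finset.sum_le_sum fun v _ => ?_)
  rw [abs_mul]
  exact mul_le_of_le_one_right (abs_nonneg _) (B.abs_nextBitGain_le_one _ _ _)

end Hybrid

theorem stmt0_general {n w s : ℕ} (B : OBP n w) (G : (Fin s → Bool) → Fin n → Bool)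
    (ε : ℝ)
    (h : ∀ i, i < n → ∑ v : Fin w, |ExpG G (i + 1) (Nv B v)| ≤ ε) :
    |Exp (fun x : Fin n → Bool => bval (B.eval x)) -
      Exp (fun y : Fin s → Bool => bval (B.eval (G y)))| ≤ ε * n := by
  rw [← hybrid_zero B G, ← hybrid_self B G, ← Real.dist_eq]
  calc dist (hybrid B G 0) (hybrid B G n)
      ≤ ∑ i ∈ range n, dist (hybrid B G i) (hybrid B G (i + 1)) := dist_le_range_sum_dist _ n
    _ ≤ ∑ _i ∈ range n, ε := Finset.sum_le_sum fun i hi => by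
        rw [dist_comm, Real.dist_eq]
        exact (abs_hybrid_succ_sub_le B G (mem_range.mp hi)).trans (h i (mem_range.mp hi))
    _ = ε * n := by simp [mul_comm]

theorem stmt0 {n w s : ℕ} (B : OBP n w) (G : (Fin s → Bool) → Fin n → Bool)
    (ε : ℝ) (hε : 0 ≤ ε)
    (h : ∀ i, i < n → ∑ v : Fin w, |ExpG G (i + 1) (Nv B v)| ≤ ε) :
    |Exp (fun x : Fin n → Bool => bval (B.eval x)) -
      Exp (fun y : Fin s → Bool => bval (B.eval (G y)))| ≤ ε * n :=
  stmt0_general B G ε h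
end

section
/- Let B be an ordered branching program of length n and width w, let G : {0,1}^s → {0,1}^n, let ε > 0, and suppose for some i < n that ∑_{v∈V_i} |E_G[N_v]| > ε. Define T : {0,1}^i → {0,1} by T(x) = 1 if E_G[N_v] ≥ 0 and T(x) = 0 otherwise, where v = B[v_st, x] ∈ V_i. Then Pr_{y←U_s}[T(G(y)_{1..i}) = G(y)_{i+1}] = (1/2)·∑_{v∈V_i} (E_G[B_{→v}] + |E_G[N_v]|) > (1/2)(1 + ε). -/
open Finset
open scoped Classical

/-!
Encode bits as signs `±1`. The predictor is right on `(x, b)` exactly when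
`(1 + sgn (T x) * sgn b) / 2 = 1`, and `sgn b` at the state `v` reached by `x` is `N_v (x, b)`.
Taking `E_G` therefore gives success probability `½ ∑_v (E_G[B_{→v}] + sgn_v E_G[N_v])`, where
`T` picks `sgn_v` to be the sign of `E_G[N_v]`, so that each term is `|E_G[N_v]|`; the reach
indicators sum to `1`, which gives the bound.
-/

def sgn (b : Bool) : ℝ := if b then 1 else -1

lemma abs_eq_sgn_mul (a : ℝ) : |a| = sgn (decide (0 ≤ a)) * a := by
  by_cases ha : 0 ≤ a
  · simp [sgn, ha, abs_of_nonneg ha]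
  · simp [sgn, ha, abs_of_neg (not_le.mp ha)]

lemma ite_eq_half_one_add_sgn_mul (t b : Bool) :
    (if t = b then (1 : ℝ) else 0) = (1 + sgn t * sgn b) / 2 := by
  cases t <;> cases b <;> norm_num [sgn]

section Exp

variable {α : Type*} [Fintype α]

lemma prob_eq_Exp (p : α → Prop) [DecidablePred p] :
    prob p = Exp fun a => if p a then (1 : ℝ) else 0 := by
  simp only [prob, Exp, Finset.sum_boole]
  congr

lemma Exp_add (f g : α → ℝ) : Exp (fun a => f a + g a) = Exp f + Exp g := by
  simp only [Exp, sum_add_distrib, add_div]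

lemma Exp_const_mul (c : ℝ) (f : α → ℝ) : Exp (fun a => c * f a) = c * Exp f := by
  simp only [Exp, ← mul_sum, mul_div_assoc]

lemma Exp_sum_s2 {ι : Type*} (t : Finset ι) (f : ι → α → ℝ) :
    Exp (fun a => ∑ j ∈ t, f j a) = ∑ j ∈ t, Exp (f j) := by
  simp only [Exp, ← sum_div]
  rw [sum_comm]

lemma Exp_one [Nonempty α] : Exp (fun _ : α => (1 : ℝ)) = 1 := by
  simp [Exp]

end Exp

namespace OBP

variable {n w : ℕ} (B : OBP n w)

lemma sum_reachInd {i : ℕ} (x : Fin i → Bool) : ∑ v, reachInd B v x = 1 := by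
  simp [reachInd]

lemma sum_ExpG_reachInd {s : ℕ} (G : (Fin s → Bool) → Fin n → Bool) (i : ℕ) :
    ∑ v, ExpG G i (reachInd B v) = 1 := by
  simp only [ExpG, ← Exp_sum_s2, sum_reachInd, Exp_one]

lemma Nv_bits {i : ℕ} (hi : i < n) (v : Fin w) (z : Fin n → Bool) :
    Nv B v (bits z (i + 1)) = reachInd B v (bits z i) * sgn (z ⟨i, hi⟩) := by
  have hprefix : (fun j : Fin i => bits z (i + 1) j.castSucc) = bits z i := by
    funext j
    simp [bits, lt_trans j.isLt hi]
  have hlast : bits z (i + 1) (Fin.last i) = z ⟨i, hi⟩ := by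
    simp [bits, hi]
  simp only [Nv, reachInd, hprefix, hlast, sgn, ite_mul, one_mul, zero_mul]

lemma ite_guess_eq_sum {i : ℕ} (s : Fin w → Bool) (x : Fin i → Bool) (b : Bool) :
    (if s (B.reach x) = b then (1 : ℝ) else 0) =
      1 / 2 * ∑ v, (reachInd B v x + sgn (s v) * (reachInd B v x * sgn b)) := by
  have hguess : ∑ v, sgn (s v) * (reachInd B v x * sgn b) = sgn (s (B.reach x)) * sgn b := by
    simp [reachInd, ite_mul, mul_ite]
  rw [sum_add_distrib, sum_reachInd, hguess, ite_eq_half_one_add_sgn_mul]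
  ring

end OBP

theorem stmt2_general {n w s : ℕ} (B : OBP n w) (G : (Fin s → Bool) → Fin n → Bool)
    (ε : ℝ) (i : ℕ) (hi : i < n)
    (h : ε < ∑ v : Fin w, |ExpG G (i + 1) (Nv B v)|)
    (T : (Fin i → Bool) → Bool)
    (hT : ∀ x : Fin i → Bool, T x = true ↔ 0 ≤ ExpG G (i + 1) (Nv B (B.reach x))) :
    (prob (fun y : Fin s → Bool => T (bits (G y) i) = G y ⟨i, hi⟩) =
      (1 / 2) * ∑ v : Fin w, (ExpG G i (reachInd B v) + |ExpG G (i + 1) (Nv B v)|)) ∧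
    (1 / 2) * (1 + ε) < prob (fun y : Fin s → Bool => T (bits (G y) i) = G y ⟨i, hi⟩) := by
  set guess : Fin w → Bool := fun v => decide (0 ≤ ExpG G (i + 1) (Nv B v))
  have hguess : ∀ y : Fin s → Bool,
      (if T (bits (G y) i) = G y ⟨i, hi⟩ then (1 : ℝ) else 0) =
        1 / 2 * ∑ v, (reachInd B v (bits (G y) i) + sgn (guess v) * Nv B v (bits (G y) (i + 1))) :=
    fun y => by
      have hTy : T (bits (G y) i) = guess (B.reach (bits (G y) i)) := by
        rw [Bool.eq_iff_iff, hT, decide_eq_true_iff]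
      simp only [hTy, B.ite_guess_eq_sum guess, B.Nv_bits hi]
  have hprob : prob (fun y : Fin s → Bool => T (bits (G y) i) = G y ⟨i, hi⟩) =
      (1 / 2) * ∑ v : Fin w, (ExpG G i (reachInd B v) + |ExpG G (i + 1) (Nv B v)|) := by
    simp only [prob_eq_Exp, hguess, Exp_const_mul, Exp_sum_s2, Exp_add, abs_eq_sgn_mul]
    rfl
  refine ⟨hprob, ?_⟩
  rw [hprob, sum_add_distrib, B.sum_ExpG_reachInd]
  linarith

theorem stmt2 {n w s : ℕ} (B : OBP n w) (G : (Fin s → Bool) → Fin n → Bool)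
    (ε : ℝ) (hε : 0 < ε) (i : ℕ) (hi : i < n)
    (h : ε < ∑ v : Fin w, |ExpG G (i + 1) (Nv B v)|)
    (T : (Fin i → Bool) → Bool)
    (hT : ∀ x : Fin i → Bool, T x = true ↔ 0 ≤ ExpG G (i + 1) (Nv B (B.reach x))) :
    (prob (fun y : Fin s → Bool => T (bits (G y) i) = G y ⟨i, hi⟩) =
      (1 / 2) * ∑ v : Fin w, (ExpG G i (reachInd B v) + |ExpG G (i + 1) (Nv B v)|)) ∧
    (1 / 2) * (1 + ε) < prob (fun y : Fin s → Bool => T (bits (G y) i) = G y ⟨i, hi⟩) :=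
  stmt2_general B G ε i hi h T hT
end

section
/- Let F = F_2^k be the k-dimensional vector space over the field with two elements, with ⊕ denoting addition in F, ⟨·,·⟩ the inner product mod 2, and e_1, ..., e_k the standard basis vectors. Let ℓ ≥ 1, let p : F^ℓ → F be any function, and define g : F^ℓ × F → {0,1} by g(x,y) = ⟨p(x), y⟩. Suppose B : F^ℓ × F → {0,1} satisfies Pr_{(x,y)←uniform}[B(x,y) = g(x,y)] > 0.99. Define B′ : F^ℓ → F coordinate-wise by (B′(x))_i = 1 if and only if |{z ∈ F : B(x, e_i ⊕ z) ⊕ B(x, z) = 1}| > |F|/2. Then Pr_{x←uniform over F^ℓ}[B′(x) = p(x)] ≥ 0.96. -/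
open Finset
open scoped Classical

/-!
Fix `x`. If `B x` disagrees with the linear form `⟨p x, ·⟩` on fewer than a quarter of `F`, then
`B x (e_i + z) + B x z = (p x)_i` fails only when `z` or `e_i + z` is an error point, i.e. for fewer
than half of all `z`, so the majority vote `B' x` recovers `p x`. By Markov's inequality the `x`
for which `B x` errs on at least a quarter of `F` have probability at most `4 · 0.01`.
-/

theorem prob_eq_card_div {α : Type*} [Fintype α] (P : α → Prop) [DecidablePred P] :
    prob P = #{a | P a} / Fintype.card α := by
  unfold prob
  convert rfl

theorem prob_mono {α : Type*} [Fintype α] {P Q : α → Prop} (h : ∀ a, P a → Q a) :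
    prob P ≤ prob Q := by
  unfold prob
  gcongr with a
  exact h a

section FailCount

variable {α β : Type*} [Fintype α] [Fintype β]

noncomputable def failCount (P : α × β → Prop) (x : α) : ℕ := #{y | ¬ P (x, y)}

theorem card_filter_add_sum_failCount (P : α × β → Prop) :
    #{xy | P xy} + ∑ x, failCount P x = Fintype.card α * Fintype.card β := by
  have hfail : ∑ x, failCount P x = #{xy | ¬ P xy} := by
    rw [card_filter, Fintype.sum_prod_type]
    simp only [failCount, card_filter]
  rw [hfail, card_filter_add_card_filter_not, card_univ, Fintype.card_prod]

theorem card_mul_card_filter_le_mul_sum_failCount (P : α × β → Prop) (c : ℕ) :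
    Fintype.card β * #{x | Fintype.card β ≤ c * failCount P x} ≤ c * ∑ x, failCount P x := by
  calc Fintype.card β * #{x | Fintype.card β ≤ c * failCount P x}
      ≤ ∑ x ∈ {x | Fintype.card β ≤ c * failCount P x}, c * failCount P x := by
        rw [mul_comm, ← smul_eq_mul]
        exact card_nsmul_le_sum _ _ _ fun x hx => (mem_filter.mp hx).2
    _ ≤ ∑ x, c * failCount P x := sum_le_sum_of_subset (subset_univ _)
    _ = c * ∑ x, failCount P x := (mul_sum _ _ _).symm

theorem one_sub_mul_le_prob_failCount_lt [Nonempty α] [Nonempty β] (P : α × β → Prop) (c : ℕ) :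
    1 - c * (1 - prob P) ≤ prob (fun x => c * failCount P x < Fintype.card β) := by
  have hpair := card_filter_add_sum_failCount P
  have hmarkov := card_mul_card_filter_le_mul_sum_failCount P c
  have hsplit : #{x | c * failCount P x < Fintype.card β} +
      #{x | Fintype.card β ≤ c * failCount P x} = Fintype.card α := by
    simpa only [not_lt, card_univ] using card_filter_add_card_filter_not (s := univ)
      (p := fun x => c * failCount P x < Fintype.card β)
  have ha : (0 : ℝ) < Fintype.card α := by exact_mod_cast Fintype.card_pos
  have hb : (0 : ℝ) < Fintype.card β := by exact_mod_cast Fintype.card_pos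
  rw [prob_eq_card_div, prob_eq_card_div, Fintype.card_prod, Nat.cast_mul]
  have hpairR : (#{xy | P xy} : ℝ) = Fintype.card α * Fintype.card β - ∑ x, failCount P x := by
    rw [eq_sub_iff_add_eq]; exact_mod_cast hpair
  have hgoodR : (#{x | c * failCount P x < Fintype.card β} : ℝ) =
      Fintype.card α - #{x | Fintype.card β ≤ c * failCount P x} := by
    rw [eq_sub_iff_add_eq]; exact_mod_cast hsplit
  have hmarkovR : (Fintype.card β : ℝ) * #{x | Fintype.card β ≤ c * failCount P x} ≤
      c * ∑ x, (failCount P x : ℝ) := by exact_mod_cast hmarkov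
  rw [hpairR, hgoodR]
  push_cast
  field_simp
  linarith

end FailCount

theorem ZMod.eq_of_eq_one_iff_eq_one {a b : ZMod 2} (h : a = 1 ↔ b = 1) : a = b := by
  revert a b
  decide

section MajorityDecoding

variable {V : Type*} [AddCommGroup V] [Fintype V] (f : V → ZMod 2) (L : V →+ ZMod 2)

theorem card_filter_add_shift_ne_le (v : V) :
    #{z | f (v + z) + f z ≠ L v} ≤ 2 * #{y | f y ≠ L y} := by
  have hshift : #{z | f (v + z) ≠ L (v + z)} = #{y | f y ≠ L y} :=
    card_equiv (Equiv.addLeft v) (by simp)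
  calc #{z | f (v + z) + f z ≠ L v}
      ≤ #{z | f (v + z) ≠ L (v + z) ∨ f z ≠ L z} := by
        refine card_le_card fun z => ?_
        simp only [mem_filter, mem_univ, true_and]
        contrapose!
        rintro ⟨h₁, h₂⟩
        rw [h₁, h₂, map_add, add_assoc, CharTwo.add_self_eq_zero, add_zero]
    _ ≤ #{z | f (v + z) ≠ L (v + z)} + #{z | f z ≠ L z} := by
        rw [filter_or]
        exact card_union_le _ _
    _ = 2 * #{y | f y ≠ L y} := by rw [hshift, two_mul]

theorem card_lt_two_mul_card_filter_add_shift_eq_one_iff (v : V)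
    (hf : 4 * #{y | f y ≠ L y} < Fintype.card V) :
    Fintype.card V < 2 * #{z | f (v + z) + f z = 1} ↔ L v = 1 := by
  have herr := card_filter_add_shift_ne_le f L v
  have hsplit : #{z | f (v + z) + f z = 1} + #{z | f (v + z) + f z ≠ 1} = Fintype.card V := by
    simpa only [card_univ] using card_filter_add_card_filter_not (s := univ)
      (p := fun z => f (v + z) + f z = 1)
  have hne_zero : ∀ a : ZMod 2, a ≠ 0 ↔ a = 1 := by decide
  rcases (by decide : ∀ a : ZMod 2, a = 0 ∨ a = 1) (L v) with h | h
  · simp only [h, hne_zero] at herr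
    simp only [h, zero_ne_one, iff_false, not_lt]
    omega
  · simp only [h] at herr
    simp only [h, iff_true]
    omega

end MajorityDecoding

theorem stmt4_general (k ℓ : ℕ)
    (p : (Fin ℓ → (Fin k → ZMod 2)) → (Fin k → ZMod 2))
    (B : (Fin ℓ → (Fin k → ZMod 2)) → (Fin k → ZMod 2) → ZMod 2)
    (hB : 0.99 < prob (fun xy : (Fin ℓ → (Fin k → ZMod 2)) × (Fin k → ZMod 2) =>
        B xy.1 xy.2 = ∑ i : Fin k, p xy.1 i * xy.2 i))
    (B' : (Fin ℓ → (Fin k → ZMod 2)) → (Fin k → ZMod 2))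
    (hB' : ∀ (x : Fin ℓ → (Fin k → ZMod 2)) (i : Fin k),
      B' x i = 1 ↔ Fintype.card (Fin k → ZMod 2) <
        2 * (Finset.univ.filter (fun z : Fin k → ZMod 2 =>
          B x (Pi.single i 1 + z) + B x z = 1)).card) :
    0.96 ≤ prob (fun x : Fin ℓ → (Fin k → ZMod 2) => B' x = p x) := by
  set P := fun xy : (Fin ℓ → (Fin k → ZMod 2)) × (Fin k → ZMod 2) =>
    B xy.1 xy.2 = ∑ i : Fin k, p xy.1 i * xy.2 i
  have hdecode : ∀ x, 4 * failCount P x < Fintype.card (Fin k → ZMod 2) → B' x = p x := by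
    intro x hx
    funext i
    let L : (Fin k → ZMod 2) →+ ZMod 2 := AddMonoidHom.mk' (p x ⬝ᵥ ·) (dotProduct_add _)
    have herr : #{y | B x y ≠ L y} = failCount P x := by
      unfold failCount
      convert rfl
      rfl
    have hmaj := card_lt_two_mul_card_filter_add_shift_eq_one_iff (B x) L (Pi.single i 1)
      (herr ▸ hx)
    rw [AddMonoidHom.mk'_apply, dotProduct_single_one] at hmaj
    exact ZMod.eq_of_eq_one_iff_eq_one ((hB' x i).trans hmaj)
  calc (0.96 : ℝ) ≤ 1 - 4 * (1 - prob P) := by linarith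
    _ ≤ prob (fun x => 4 * failCount P x < Fintype.card (Fin k → ZMod 2)) := by
      exact_mod_cast one_sub_mul_le_prob_failCount_lt P 4
    _ ≤ _ := prob_mono hdecode

theorem stmt4 (k ℓ : ℕ) (hℓ : 1 ≤ ℓ)
    (p : (Fin ℓ → (Fin k → ZMod 2)) → (Fin k → ZMod 2))
    (B : (Fin ℓ → (Fin k → ZMod 2)) → (Fin k → ZMod 2) → ZMod 2)
    (hB : 0.99 < prob (fun xy : (Fin ℓ → (Fin k → ZMod 2)) × (Fin k → ZMod 2) =>
        B xy.1 xy.2 = ∑ i : Fin k, p xy.1 i * xy.2 i))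
    (B' : (Fin ℓ → (Fin k → ZMod 2)) → (Fin k → ZMod 2))
    (hB' : ∀ (x : Fin ℓ → (Fin k → ZMod 2)) (i : Fin k),
      B' x i = 1 ↔ Fintype.card (Fin k → ZMod 2) <
        2 * (Finset.univ.filter (fun z : Fin k → ZMod 2 =>
          B x (Pi.single i 1 + z) + B x z = 1)).card) :
    0.96 ≤ prob (fun x : Fin ℓ → (Fin k → ZMod 2) => B' x = p x) :=
  stmt4_general k ℓ p B hB B' hB'
end

section
/- Let m ≥ 2, let δ ∈ [2^{−m}, 1], let ℓ = ⌈log_2(128m/δ² + 1)⌉, and let BIAS : {0,1}^t → ({0,1}^m)^ℓ be a 2^{−4m−1}-biased generator. Let A ⊆ {0,1}^m satisfy |A| ≥ (1/2 + δ/2)·2^m and let w ∈ {0,1}^m be arbitrary. Then Pr_{(r_1,...,r_ℓ)←BIAS(U_t)}[ |{J ⊆ [ℓ] : J ≠ ∅ and r^J ⊕ w ∈ A}| ≤ (2^ℓ − 1)/2 ] ≤ 1/(2m). -/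
open Finset
open scoped Classical

/-!
Second-moment argument. Let `p = |A| / 2^m` and `L = 2^ℓ - 1`. Expanding the indicator of `A`
in Walsh characters, the centred count `∑_{J ≠ ∅} (1_A(r^J ⊕ w) - p)` becomes a combination,
with coefficients `Â(S) (-1)^⟨S, w⟩` over pairs `(J, S)` with `S ≠ 0`, of the characters
`y ↦ (-1)^⟨S, r^J⟩ = (-1)^⟨T(J,S), BIAS y⟩`, where `T(J,S)` puts `S` in the rows `i ∈ J`.
Distinct pairs give distinct `T`, so the bias makes these characters almost orthogonal, and by
Parseval the second moment of the centred count is at most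
`(1 + 2ε L 2^m) · L · (p - p²)`. On the bad event the centred count is at most `-(p - 1/2) L`,
so Chebyshev gives the bound `(1 + L / 2^{3m}) (p - p²) / ((p - 1/2)² L)`, which the choice
of `ℓ` makes at most `1 / (2m)`.
-/

lemma zmodTwo_eq_zero_or_eq_one (a : ZMod 2) : a = 0 ∨ a = 1 := by
  revert a; decide

noncomputable def signChar : AddChar (ZMod 2) ℝ :=
  AddChar.zmodChar 2 (ζ := (-1 : ℝ)) (by norm_num)

@[simp] lemma signChar_one : signChar 1 = -1 := by
  rw [signChar, AddChar.zmodChar_apply, ZMod.val_one, pow_one]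

lemma signChar_eq_one_sub_two_mul (a : ZMod 2) :
    signChar a = 1 - 2 * if a = 1 then 1 else 0 := by
  rcases zmodTwo_eq_zero_or_eq_one a with rfl | rfl <;> norm_num

@[simp] lemma signChar_mul_self (a : ZMod 2) : signChar a * signChar a = 1 := by
  rcases zmodTwo_eq_zero_or_eq_one a with rfl | rfl <;> norm_num

lemma signChar_sub (a b : ZMod 2) : signChar (a - b) = signChar a * signChar b := by
  rw [CharTwo.sub_eq_add, AddChar.map_add_eq_mul]

section Walsh

variable {ι : Type*} [Fintype ι]

lemma sum_signChar_dotProduct (x : ι → ZMod 2) :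
    ∑ S : ι → ZMod 2, signChar (S ⬝ᵥ x) = if x = 0 then (2 : ℝ) ^ Fintype.card ι else 0 := by
  let ψ : AddChar (ι → ZMod 2) ℝ :=
    signChar.compAddMonoidHom (AddMonoidHom.mk' (· ⬝ᵥ x) fun S S' => add_dotProduct S S' x)
  have hψ : ψ = 0 ↔ x = 0 := by
    refine ⟨fun h => funext fun j => by_contra fun hx => ?_, fun h => by ext S; simp [ψ, h]⟩
    have hj := DFunLike.congr_fun h (Pi.single j 1)
    norm_num [ψ, (zmodTwo_eq_zero_or_eq_one (x j)).resolve_left hx] at hj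
  refine (AddChar.sum_eq_ite ψ).trans ?_
  simp only [hψ, Fintype.card_fun, ZMod.card, Nat.cast_pow, Nat.cast_ofNat]

lemma sum_signChar_dotProduct_mul (a b : ι → ZMod 2) :
    ∑ S : ι → ZMod 2, signChar (S ⬝ᵥ a) * signChar (S ⬝ᵥ b) =
      if a = b then (2 : ℝ) ^ Fintype.card ι else 0 := by
  simp only [← signChar_sub, ← dotProduct_sub, sum_signChar_dotProduct, sub_eq_zero]

noncomputable def walshCoeff (A : Finset (ι → ZMod 2)) (S : ι → ZMod 2) : ℝ :=
  (∑ a ∈ A, signChar (S ⬝ᵥ a)) / 2 ^ Fintype.card ι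

lemma walshCoeff_zero (A : Finset (ι → ZMod 2)) :
    walshCoeff A 0 = #A / 2 ^ Fintype.card ι := by
  simp [walshCoeff]

lemma sum_walshCoeff_mul_signChar (A : Finset (ι → ZMod 2)) (x : ι → ZMod 2) :
    ∑ S, walshCoeff A S * signChar (S ⬝ᵥ x) = if x ∈ A then 1 else 0 := by
  simp only [walshCoeff, div_mul_eq_mul_div, sum_mul, ← sum_div]
  rw [sum_comm, sum_congr rfl fun a _ => sum_signChar_dotProduct_mul a x, sum_ite_eq']
  split_ifs <;> simp

lemma sum_walshCoeff_sq (A : Finset (ι → ZMod 2)) :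
    ∑ S, walshCoeff A S ^ 2 = #A / 2 ^ Fintype.card ι := by
  simp only [walshCoeff, div_pow]
  simp only [sq, sum_mul_sum, ← sum_div]
  rw [sum_comm, sum_congr rfl fun a _ => sum_comm]
  simp only [sum_signChar_dotProduct_mul, sum_ite_eq, sum_ite_mem, inter_self, sum_const,
    nsmul_eq_mul]
  field_simp

lemma sum_erase_zero_walshCoeff_mul_signChar (A : Finset (ι → ZMod 2)) (x : ι → ZMod 2) :
    ∑ S ∈ univ.erase 0, walshCoeff A S * signChar (S ⬝ᵥ x) =
      (if x ∈ A then 1 else 0) - #A / 2 ^ Fintype.card ι := by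
  rw [← sum_walshCoeff_mul_signChar A x, ← add_sum_erase _ _ (mem_univ 0), walshCoeff_zero]
  simp

lemma sum_erase_zero_walshCoeff_sq (A : Finset (ι → ZMod 2)) :
    ∑ S ∈ univ.erase 0, walshCoeff A S ^ 2 =
      #A / 2 ^ Fintype.card ι - (#A / 2 ^ Fintype.card ι) ^ 2 := by
  have h := sum_walshCoeff_sq A
  rw [← add_sum_erase _ _ (mem_univ 0), walshCoeff_zero] at h
  linarith

end Walsh

lemma prob_mul_card {α : Type*} [Fintype α] (P : α → Prop) [DecidablePred P] :
    prob P * Fintype.card α = #(univ.filter P) := by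
  rcases isEmpty_or_nonempty α with hα | hα
  · simp
  · rw [prob, div_mul_cancel₀ _ (by positivity)]
    congr

lemma prob_mul_mul_card_le_sum {Ω : Type*} [Fintype Ω] (P : Ω → Prop) (f : Ω → ℝ) {θ : ℝ}
    (hf0 : ∀ y, 0 ≤ f y) (hf : ∀ y, P y → θ ≤ f y) :
    prob P * θ * Fintype.card Ω ≤ ∑ y, f y := by
  calc prob P * θ * Fintype.card Ω = ∑ y ∈ univ.filter P, θ := by
        rw [sum_const, nsmul_eq_mul, ← prob_mul_card]; ring
    _ ≤ ∑ y ∈ univ.filter P, f y := sum_le_sum fun y hy => hf y (mem_filter.mp hy).2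
    _ ≤ ∑ y, f y := sum_le_sum_of_subset_of_nonneg (filter_subset _ _) fun y _ _ => hf0 y

lemma abs_sum_signChar_le_of_prob_mem_Icc {Ω : Type*} [Fintype Ω] (F : Ω → ZMod 2) {ε : ℝ}
    (hF : prob (fun y => F y = 1) ∈ Set.Icc (1 / 2 - ε) (1 / 2 + ε)) :
    |∑ y, signChar (F y)| ≤ 2 * ε * Fintype.card Ω := by
  have hsum : ∑ y, signChar (F y) = Fintype.card Ω * (1 - 2 * prob (fun y => F y = 1)) := by
    simp only [signChar_eq_one_sub_two_mul, sum_sub_distrib, ← mul_sum, sum_boole, sum_const,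
      card_univ, nsmul_eq_mul, mul_one, ← prob_mul_card]
    ring
  have hbias : |1 - 2 * prob (fun y => F y = 1)| ≤ 2 * ε :=
    abs_le.mpr ⟨by linarith [hF.2], by linarith [hF.1]⟩
  rw [hsum, abs_mul, Nat.abs_cast, mul_comm]
  exact mul_le_mul_of_nonneg_right hbias (Nat.cast_nonneg _)

lemma sum_sq_sum_le_of_almost_orthogonal {Ω Q : Type*} [Fintype Ω] (D : Finset Q) (c : Q → ℝ)
    (X : Q → Ω → ℝ) {K W : ℝ} (hW : 0 ≤ W) (hdiag : ∀ q ∈ D, ∑ y, X q y ^ 2 ≤ K)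
    (hoff : ∀ q ∈ D, ∀ q' ∈ D, q ≠ q' → |∑ y, X q y * X q' y| ≤ W) :
    ∑ y, (∑ q ∈ D, c q * X q y) ^ 2 ≤ (K + W * #D) * ∑ q ∈ D, c q ^ 2 := by
  have hexpand : ∑ y, (∑ q ∈ D, c q * X q y) ^ 2 =
      ∑ q ∈ D, ∑ q' ∈ D, c q * c q' * ∑ y, X q y * X q' y := by
    simp_rw [sq, sum_mul_sum]
    rw [sum_comm]
    refine sum_congr rfl fun q _ => ?_
    rw [sum_comm]
    refine sum_congr rfl fun q' _ => ?_
    rw [mul_sum]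
    exact sum_congr rfl fun y _ => by ring
  have hterm : ∀ q ∈ D, ∀ q' ∈ D, c q * c q' * ∑ y, X q y * X q' y ≤
      (if q = q' then c q ^ 2 * K else 0) + W * (|c q| * |c q'|) := by
    intro q hq q' hq'
    have hW' : 0 ≤ W * (|c q| * |c q'|) := by positivity
    split_ifs with h
    · subst h
      have := mul_le_mul_of_nonneg_left (hdiag q hq) (sq_nonneg (c q))
      simp only [← sq] at this ⊢
      linarith
    · calc c q * c q' * ∑ y, X q y * X q' y
          ≤ |c q| * |c q'| * |∑ y, X q y * X q' y| := by
            rw [← abs_mul, ← abs_mul]; exact le_abs_self _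
        _ ≤ |c q| * |c q'| * W := by gcongr; exact hoff q hq q' hq' h
        _ = 0 + W * (|c q| * |c q'|) := by ring
  have hcs : (∑ q ∈ D, |c q|) ^ 2 ≤ #D * ∑ q ∈ D, c q ^ 2 := by
    simpa only [sq_abs] using sq_sum_le_card_mul_sum_sq (s := D) (f := fun q => |c q|)
  calc ∑ y, (∑ q ∈ D, c q * X q y) ^ 2
      ≤ ∑ q ∈ D, ∑ q' ∈ D, ((if q = q' then c q ^ 2 * K else 0) + W * (|c q| * |c q'|)) := by
        rw [hexpand]; exact sum_le_sum fun q hq => sum_le_sum fun q' hq' => hterm q hq q' hq'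
    _ = K * ∑ q ∈ D, c q ^ 2 + W * (∑ q ∈ D, |c q|) ^ 2 := by
        simp only [sum_add_distrib, sum_ite_eq, ← mul_sum, sq, sum_mul_sum]
        rw [sum_congr rfl fun q hq => if_pos hq, ← sum_mul]
        ring
    _ ≤ (K + W * #D) * ∑ q ∈ D, c q ^ 2 := by nlinarith [mul_le_mul_of_nonneg_left hcs hW]

lemma card_filter_nonempty (κ : Type*) [Fintype κ] :
    (#(univ.filter fun J : Finset κ => J.Nonempty) : ℝ) = 2 ^ Fintype.card κ - 1 := by
  have h : univ.filter (fun J : Finset κ => J.Nonempty) = univ.erase ∅ := by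
    ext J; simp [nonempty_iff_ne_empty]
  rw [h, card_erase_of_mem (mem_univ _), card_univ, Fintype.card_finset,
    Nat.cast_sub Nat.one_le_two_pow]
  push_cast; rfl

section TestVector

variable {κ ι : Type*}

noncomputable def testVector (J : Finset κ) (S : ι → ZMod 2) : κ → ι → ZMod 2 :=
  fun i => if i ∈ J then S else 0

lemma sum_testVector_dotProduct [Fintype κ] [Fintype ι] (J : Finset κ) (S : ι → ZMod 2)
    (r : κ → ι → ZMod 2) :
    ∑ i, testVector J S i ⬝ᵥ r i = S ⬝ᵥ ∑ i ∈ J, r i := by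
  have h : ∀ i, testVector J S i ⬝ᵥ r i = if i ∈ J then S ⬝ᵥ r i else 0 := fun i => by
    by_cases hi : i ∈ J <;> simp [testVector, hi]
  rw [sum_congr rfl fun i _ => h i, sum_ite_mem, univ_inter, dotProduct_sum]

lemma testVector_injOn :
    Set.InjOn (fun q : Finset κ × (ι → ZMod 2) => testVector q.1 q.2)
      {q | q.1.Nonempty ∧ q.2 ≠ 0} := by
  rintro ⟨J, S⟩ ⟨⟨i, hi⟩, hS⟩ ⟨J', S'⟩ ⟨-, hS'⟩ h
  have hT := congrFun h
  simp only [testVector] at hT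
  have hSS : S = S' := by
    have := hT i
    by_cases hi' : i ∈ J' <;> simp_all
  subst hSS
  refine Prod.ext (Finset.ext fun k => ?_) rfl
  have := hT k
  by_cases hk : k ∈ J <;> by_cases hk' : k ∈ J' <;> simp_all

lemma sum_indicator_sub_density_eq [Fintype κ] [Fintype ι] (A : Finset (ι → ZMod 2))
    (w : ι → ZMod 2) (r : κ → ι → ZMod 2) :
    ∑ J ∈ univ.filter Finset.Nonempty,
        ((if (∑ i ∈ J, r i) + w ∈ A then 1 else 0) - (#A : ℝ) / 2 ^ Fintype.card ι) =
      ∑ q ∈ (univ.filter Finset.Nonempty) ×ˢ univ.erase 0,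
        walshCoeff A q.2 * signChar (q.2 ⬝ᵥ w) *
          signChar (∑ i, testVector q.1 q.2 i ⬝ᵥ r i) := by
  rw [sum_product]
  refine sum_congr rfl fun J _ => ?_
  rw [← sum_erase_zero_walshCoeff_mul_signChar]
  refine sum_congr rfl fun S _ => ?_
  rw [sum_testVector_dotProduct, dotProduct_add, AddChar.map_add_eq_mul]
  ring

end TestVector

section Biased

variable {Ω κ ι : Type*} [Fintype Ω] [Fintype κ] [Fintype ι]

/-- An `ε`-biased generator whose output `{0,1}^(κ × ι)` is read as `κ` rows in `{0,1}^ι`. -/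
def IsBiased (ε : ℝ) (r : Ω → κ → ι → ZMod 2) : Prop :=
  ∀ T : κ → ι → ZMod 2, T ≠ 0 →
    prob (fun y => (∑ i, ∑ j, T i j * r y i j) = 1) ∈ Set.Icc (1 / 2 - ε) (1 / 2 + ε)

variable {ε : ℝ} {r : Ω → κ → ι → ZMod 2}

lemma IsBiased.abs_sum_signChar_le (hr : IsBiased ε r) {T : κ → ι → ZMod 2} (hT : T ≠ 0) :
    |∑ y, signChar (∑ i, T i ⬝ᵥ r y i)| ≤ 2 * ε * Fintype.card Ω :=
  abs_sum_signChar_le_of_prob_mem_Icc _ (hr T hT)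

lemma IsBiased.sum_sq_sum_indicator_sub_density_le (hε : 0 ≤ ε) (hr : IsBiased ε r)
    (A : Finset (ι → ZMod 2)) (w : ι → ZMod 2) :
    ∑ y, (∑ J ∈ univ.filter Finset.Nonempty,
        ((if (∑ i ∈ J, r y i) + w ∈ A then 1 else 0) - (#A : ℝ) / 2 ^ Fintype.card ι)) ^ 2 ≤
      Fintype.card Ω * (1 + 2 * ε * (2 ^ Fintype.card κ - 1) * 2 ^ Fintype.card ι) *
        (2 ^ Fintype.card κ - 1) * (#A / 2 ^ Fintype.card ι - (#A / 2 ^ Fintype.card ι) ^ 2) := by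
  simp only [sum_indicator_sub_density_eq, ← card_filter_nonempty]
  have hv : 0 ≤ #A / 2 ^ Fintype.card ι - (#A / 2 ^ Fintype.card ι : ℝ) ^ 2 := by
    rw [← sum_erase_zero_walshCoeff_sq]; positivity
  set N := univ.filter fun J : Finset κ => J.Nonempty
  set D := N ×ˢ univ.erase (0 : ι → ZMod 2)
  set v : ℝ := #A / 2 ^ Fintype.card ι - (#A / 2 ^ Fintype.card ι) ^ 2
  have hdiag : ∀ q ∈ D, ∑ y, signChar (∑ i, testVector q.1 q.2 i ⬝ᵥ r y i) ^ 2 ≤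
      Fintype.card Ω := fun q _ => by simp [sq]
  have hoff : ∀ q ∈ D, ∀ q' ∈ D, q ≠ q' →
      |∑ y, signChar (∑ i, testVector q.1 q.2 i ⬝ᵥ r y i) *
        signChar (∑ i, testVector q'.1 q'.2 i ⬝ᵥ r y i)| ≤
      2 * ε * Fintype.card Ω := fun q hq q' hq' hne => by
    have hmem : ∀ q ∈ D, q.1.Nonempty ∧ q.2 ≠ 0 := fun q hq => by
      simp only [D, N, mem_product, mem_filter, mem_erase] at hq
      exact ⟨hq.1.2, hq.2.1⟩
    have hT : testVector q.1 q.2 - testVector q'.1 q'.2 ≠ 0 :=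
      sub_ne_zero.mpr fun h => hne (testVector_injOn (hmem q hq) (hmem q' hq') h)
    simpa only [← signChar_sub, ← sum_sub_distrib, ← sub_dotProduct, Pi.sub_apply]
      using hr.abs_sum_signChar_le hT
  have hcoeff : ∑ q ∈ D, (walshCoeff A q.2 * signChar (q.2 ⬝ᵥ w)) ^ 2 = #N * v := by
    simp only [D, sum_product, mul_pow, sq (signChar _), signChar_mul_self, mul_one,
      sum_const, nsmul_eq_mul, sum_erase_zero_walshCoeff_sq, v]
  have hcardD : (#D : ℝ) ≤ #N * 2 ^ Fintype.card ι := by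
    rw [card_product, Nat.cast_mul]
    gcongr
    calc (#(univ.erase (0 : ι → ZMod 2)) : ℝ) ≤ #(univ : Finset (ι → ZMod 2)) := by
          exact_mod_cast card_erase_le
      _ = 2 ^ Fintype.card ι := by simp
  calc _ ≤ (Fintype.card Ω + 2 * ε * Fintype.card Ω * #D) * (#N * v) := by
        rw [← hcoeff]
        exact sum_sq_sum_le_of_almost_orthogonal D _ _ (by positivity) hdiag hoff
    _ ≤ Fintype.card Ω * (1 + 2 * ε * #N * 2 ^ Fintype.card ι) * #N * v := by
        rw [← mul_assoc]
        refine mul_le_mul_of_nonneg_right (mul_le_mul_of_nonneg_right ?_ (Nat.cast_nonneg _)) hv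
        nlinarith [mul_le_mul_of_nonneg_left hcardD (by positivity : 0 ≤ 2 * ε * Fintype.card Ω)]

lemma IsBiased.prob_card_le_half_mul_sq_le [Nonempty Ω] (hε : 0 ≤ ε) (hr : IsBiased ε r)
    (A : Finset (ι → ZMod 2)) (w : ι → ZMod 2) (hA : 1 / 2 ≤ (#A : ℝ) / 2 ^ Fintype.card ι) :
    prob (fun y => (#(univ.filter fun J : Finset κ => J.Nonempty ∧ (∑ i ∈ J, r y i) + w ∈ A) : ℝ)
        ≤ ((2 : ℝ) ^ Fintype.card κ - 1) / 2) *
      (((#A : ℝ) / 2 ^ Fintype.card ι - 1 / 2) * (2 ^ Fintype.card κ - 1)) ^ 2 ≤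
    (1 + 2 * ε * (2 ^ Fintype.card κ - 1) * 2 ^ Fintype.card ι) * (2 ^ Fintype.card κ - 1) *
      (#A / 2 ^ Fintype.card ι - (#A / 2 ^ Fintype.card ι) ^ 2) := by
  set p : ℝ := #A / 2 ^ Fintype.card ι
  set L : ℝ := 2 ^ Fintype.card κ - 1
  have hL : 0 ≤ L := sub_nonneg.mpr (one_le_pow₀ one_le_two)
  have hcount : ∀ y, ∑ J ∈ univ.filter Finset.Nonempty,
      ((if (∑ i ∈ J, r y i) + w ∈ A then 1 else 0) - p) =
      #(univ.filter fun J : Finset κ => J.Nonempty ∧ (∑ i ∈ J, r y i) + w ∈ A) - L * p :=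
    fun y => by
      rw [sum_sub_distrib, sum_boole, filter_filter, sum_const, nsmul_eq_mul,
        card_filter_nonempty]
  have hchebyshev := prob_mul_mul_card_le_sum
    (fun y => (#(univ.filter fun J : Finset κ => J.Nonempty ∧ (∑ i ∈ J, r y i) + w ∈ A) : ℝ)
      ≤ L / 2)
    (fun y => (∑ J ∈ univ.filter Finset.Nonempty,
      ((if (∑ i ∈ J, r y i) + w ∈ A then 1 else 0) - p)) ^ 2)
    (θ := ((p - 1 / 2) * L) ^ 2) (fun y => sq_nonneg _) fun y hy => by
      have h0 : 0 ≤ (p - 1 / 2) * L := mul_nonneg (by linarith) hL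
      rw [hcount y, ← neg_sq (_ - L * p)]
      exact pow_le_pow_left₀ h0 (by linarith) 2
  have hcard : (0 : ℝ) < Fintype.card Ω := by exact_mod_cast Fintype.card_pos
  have h := hchebyshev.trans (hr.sum_sq_sum_indicator_sub_density_le hε A w)
  exact le_of_mul_le_mul_right (h.trans_eq (by ring)) hcard

end Biased

lemma le_two_pow_of_natCast_eq_ceil_logb {x : ℝ} (hx : 0 < x) {ℓ : ℕ}
    (h : (ℓ : ℤ) = ⌈Real.logb 2 x⌉) : x ≤ 2 ^ ℓ := by
  have hlog : Real.logb 2 x ≤ ℓ := by exact_mod_cast h ▸ Int.le_ceil _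
  rwa [Real.logb_le_iff_le_rpow one_lt_two hx, Real.rpow_natCast] at hlog

lemma sq_mul_sub_sq_le {p δ : ℝ} (hδ : 0 ≤ δ) (hp : 1 / 2 + δ / 2 ≤ p) :
    δ ^ 2 * (p - p ^ 2) ≤ (1 - δ ^ 2) * (p - 1 / 2) ^ 2 := by
  nlinarith [mul_self_le_mul_self (by linarith : 0 ≤ δ / 2) (by linarith : δ / 2 ≤ p - 1 / 2)]

lemma mul_four_pow_le_eight_pow (m : ℕ) (hm : 2 ≤ m) :
    128 * m * 4 ^ m ≤ 63 * 8 ^ m + 128 * m := by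
  induction m, hm using Nat.le_induction with
  | base => norm_num
  | succ m hm ih =>
    have h2m : m ≤ 2 ^ m := Nat.lt_two_pow_self.le
    have h4 : 4 ^ m = 2 ^ m * 2 ^ m := by rw [← mul_pow]; norm_num
    have h8 : 8 ^ m = 4 ^ m * 2 ^ m := by rw [← mul_pow]; norm_num
    rw [pow_succ, pow_succ]
    nlinarith

lemma one_sub_sq_mul_le {m : ℕ} (hm : 2 ≤ m) {δ L : ℝ} (hδ : 1 / 2 ^ m ≤ δ)
    (hL : 128 * m ≤ δ ^ 2 * L) :
    (1 - δ ^ 2) * (1 + L / 2 ^ (3 * m)) * (2 * m) ≤ δ ^ 2 * L := by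
  set X : ℝ := 2 ^ m
  have hX : 0 < X := by positivity
  have hnat : 128 * m * X ^ 2 ≤ 63 * X ^ 3 + 128 * m := by
    have h4 : (4 : ℝ) ^ m = X ^ 2 := by rw [← pow_mul, mul_comm, pow_mul]; norm_num
    have h8 : (8 : ℝ) ^ m = X ^ 3 := by rw [← pow_mul, mul_comm, pow_mul]; norm_num
    rw [← h4, ← h8]
    exact_mod_cast mul_four_pow_le_eight_pow m hm
  have hδX : 1 ≤ δ * X := by rwa [div_le_iff₀ hX] at hδ
  have hδ0 : 0 ≤ δ := le_trans (by positivity) hδ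
  have hm' : (2 : ℝ) ≤ m := by exact_mod_cast hm
  have hL0 : 0 ≤ δ ^ 2 * L := by linarith
  have hhead : (1 - δ ^ 2) * (2 * m) ≤ δ ^ 2 * L / 64 := by nlinarith
  -- `δ ≥ 2^{-m}` is what pays for the `2^{-3m}` error term of the bias
  have htail : (1 - δ ^ 2) * L * (2 * m) ≤ 63 / 64 * (δ ^ 2 * L) * X ^ 3 := by
    have hsmall : 1 - δ ^ 2 ≤ δ ^ 2 * (X ^ 2 - 1) := by nlinarith
    calc (1 - δ ^ 2) * L * (2 * m) ≤ δ ^ 2 * (X ^ 2 - 1) * L * (2 * m) := by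
          gcongr; nlinarith
      _ = δ ^ 2 * L * (2 * m * (X ^ 2 - 1)) := by ring
      _ ≤ δ ^ 2 * L * (63 / 64 * X ^ 3) := mul_le_mul_of_nonneg_left (by nlinarith) hL0
      _ = 63 / 64 * (δ ^ 2 * L) * X ^ 3 := by ring
  have hX3 : (2 : ℝ) ^ (3 * m) = X ^ 3 := by rw [mul_comm, pow_mul]
  rw [hX3, ← mul_le_mul_iff_left₀ (pow_pos hX 3)]
  have hsplit : (1 - δ ^ 2) * (1 + L / X ^ 3) * (2 * m) * X ^ 3 =
      (1 - δ ^ 2) * (2 * m) * X ^ 3 + (1 - δ ^ 2) * L * (2 * m) := by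
    field_simp
  rw [hsplit]
  nlinarith [mul_le_mul_of_nonneg_right hhead (pow_pos hX 3).le]

lemma le_one_div_of_mul_sq_le {m : ℕ} (hm : 2 ≤ m) {δ L p P : ℝ} (hδ : 1 / 2 ^ m ≤ δ)
    (hL : 128 * m ≤ δ ^ 2 * L) (hp : 1 / 2 + δ / 2 ≤ p)
    (hP : P * ((p - 1 / 2) * L) ^ 2 ≤ (1 + L / 2 ^ (3 * m)) * L * (p - p ^ 2)) :
    P ≤ 1 / (2 * m) := by
  have hδ0 : 0 < δ := lt_of_lt_of_le (by positivity) hδ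
  have hm0 : (0 : ℝ) < 2 * m := by positivity
  have hL0 : 0 < L := by nlinarith
  have hZ : 0 < (δ * (p - 1 / 2) * L) ^ 2 := by
    have : 0 < p - 1 / 2 := by linarith
    positivity
  have key : P * (2 * m) * (δ * (p - 1 / 2) * L) ^ 2 ≤ (δ * (p - 1 / 2) * L) ^ 2 :=
    calc P * (2 * m) * (δ * (p - 1 / 2) * L) ^ 2
        = δ ^ 2 * (P * ((p - 1 / 2) * L) ^ 2) * (2 * m) := by ring
      _ ≤ δ ^ 2 * ((1 + L / 2 ^ (3 * m)) * L * (p - p ^ 2)) * (2 * m) := by gcongr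
      _ = (1 + L / 2 ^ (3 * m)) * L * (δ ^ 2 * (p - p ^ 2)) * (2 * m) := by ring
      _ ≤ (1 + L / 2 ^ (3 * m)) * L * ((1 - δ ^ 2) * (p - 1 / 2) ^ 2) * (2 * m) := by
          have : 0 ≤ (1 + L / 2 ^ (3 * m)) * L := by positivity
          gcongr _ * ?_ * _
          exact sq_mul_sub_sq_le hδ0.le hp
      _ = (1 - δ ^ 2) * (1 + L / 2 ^ (3 * m)) * (2 * m) * (L * (p - 1 / 2) ^ 2) := by ring
      _ ≤ δ ^ 2 * L * (L * (p - 1 / 2) ^ 2) := by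
          gcongr ?_ * _
          exact one_sub_sq_mul_le hm hδ hL
      _ = (δ * (p - 1 / 2) * L) ^ 2 := by ring
  rw [le_div_iff₀ hm0]
  exact le_of_mul_le_mul_right (key.trans_eq (one_mul _).symm) hZ

theorem stmt8 {t m : ℕ} (hm : 2 ≤ m) (δ : ℝ) (hδ : δ ∈ Set.Icc ((1 : ℝ) / 2 ^ m) 1)
    (ℓ : ℕ) (hℓ : (ℓ : ℤ) = ⌈Real.logb 2 (128 * m / δ ^ 2 + 1)⌉)
    (BIAS : (Fin t → ZMod 2) → Fin ℓ → (Fin m → ZMod 2))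
    (hB : ∀ T : Fin ℓ → Fin m → ZMod 2, T ≠ 0 →
      prob (fun y : Fin t → ZMod 2 =>
          (∑ i : Fin ℓ, ∑ j : Fin m, T i j * BIAS y i j) = 1) ∈
        Set.Icc (1 / 2 - 1 / 2 ^ (4 * m + 1) : ℝ) (1 / 2 + 1 / 2 ^ (4 * m + 1)))
    (A : Finset (Fin m → ZMod 2))
    (hA : ((1 : ℝ) / 2 + δ / 2) * 2 ^ m ≤ (A.card : ℝ))
    (w : Fin m → ZMod 2) :
    prob (fun y : Fin t → ZMod 2 =>
        ((Finset.univ.filter (fun J : Finset (Fin ℓ) =>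
            J.Nonempty ∧ (∑ i ∈ J, BIAS y i) + w ∈ A)).card : ℝ) ≤
          ((2 : ℝ) ^ ℓ - 1) / 2) ≤ 1 / (2 * m) := by
  have hδ0 : 0 < δ := lt_of_lt_of_le (by positivity) hδ.1
  have hL : 128 * m ≤ δ ^ 2 * ((2 : ℝ) ^ ℓ - 1) := by
    have h := le_two_pow_of_natCast_eq_ceil_logb (by positivity) hℓ
    rw [div_add_one (by positivity), div_le_iff₀ (by positivity)] at h
    linarith
  have hp : 1 / 2 + δ / 2 ≤ (#A : ℝ) / 2 ^ m := by rwa [le_div_iff₀ (by positivity)]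
  have hsampler := IsBiased.prob_card_le_half_mul_sq_le (r := BIAS) (by positivity) hB A w
    (by simpa using hp.trans' (by linarith))
  simp only [Fintype.card_fin] at hsampler
  have herror : 2 * (1 / 2 ^ (4 * m + 1)) * ((2 : ℝ) ^ ℓ - 1) * 2 ^ m =
      ((2 : ℝ) ^ ℓ - 1) / 2 ^ (3 * m) := by
    rw [show 4 * m + 1 = 3 * m + m + 1 by ring, pow_succ, pow_add]
    field_simp
  rw [herror] at hsampler
  exact le_one_div_of_mul_sq_le hm hδ.1 hL hp hsampler
end

section
/- Let s, n, m ∈ ℕ, let S_1, ..., S_n ⊆ [s] be subsets each of size m, and let f : {0,1}^m → {0,1}. Define G : {0,1}^s → {0,1}^n by G(x)_j = f(x|_{S_j}), where x|_{S_j} ∈ {0,1}^m is the restriction of x to the coordinates of S_j taken in increasing order. Let i < n, ε > 0, and suppose B : {0,1}^i → {0,1} satisfies Pr_{x←U_s}[B(G(x)_{1..i}) = G(x)_{i+1}] > 1/2 + ε. Then there exists an assignment z ∈ {0,1}^{[s]∖S_{i+1}} to the coordinates outside S_{i+1} such that the function C : {0,1}^m → {0,1} defined by C(w) = B(G(x_{w,z})_{1..i}),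 where x_{w,z} ∈ {0,1}^s agrees with w on the coordinates of S_{i+1} and with z elsewhere, satisfies Pr_{w←U_m}[C(w) = f(w)] > 1/2 + ε. -/
open Finset
open scoped Classical

/-!
Averaging argument: the map `(w, z) ↦ (x_{w,z}, z ∘ σ_{i+1})` is a bijection, so a uniform `x`
is distributed as `x_{w,z}` for independent uniform `w` and `z`.  Since `G(x_{w,z})_{i+1} = f w`,
the success probability of `B` is the average over `z` of the success probabilities of the
predictors `C_z`, and some `z` does at least as well as the average.
-/

section Prob

variable {α β : Type*} [Fintype α] [Fintype β]

theorem prob_comp_equiv (e : α ≃ β) (p : β → Prop) : prob (fun a => p (e a)) = prob p := by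
  unfold prob
  rw [Fintype.card_congr e, ← Fintype.card_subtype (p := p),
    ← Fintype.card_subtype (p := fun a => p (e a)),
    Fintype.card_congr (e.subtypeEquiv fun _ => Iff.rfl)]

theorem prob_prod_eq_sum_div (p : α × β → Prop) :
    prob p = (∑ b, prob fun a => p (a, b)) / Fintype.card β := by
  have hcard : (#(univ.filter p) : ℝ) = ∑ b, (#(univ.filter fun a => p (a, b)) : ℝ) := by
    simp only [card_filter, Nat.cast_sum, Nat.cast_ite, Nat.cast_one, Nat.cast_zero]
    exact Fintype.sum_prod_type_right _
  simp only [prob, ← sum_div, hcard, div_div, Fintype.card_prod, Nat.cast_mul]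

theorem prob_comp_fst [Nonempty β] (p : α → Prop) : prob (fun q : α × β => p q.1) = prob p := by
  rw [prob_prod_eq_sum_div]
  simp only [sum_const, card_univ, nsmul_eq_mul]
  exact mul_div_cancel_left₀ _ (by positivity)

theorem exists_lt_prob_of_lt_prob [Nonempty β] {c : ℝ} {p : α × β → Prop} (h : c < prob p) :
    ∃ b, c < prob fun a => p (a, b) := by
  have hβ : (0 : ℝ) < Fintype.card β := by exact_mod_cast Fintype.card_pos
  rw [prob_prod_eq_sum_div, lt_div_iff₀ hβ, mul_comm, ← nsmul_eq_mul, ← card_univ,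
    ← sum_const] at h
  obtain ⟨b, -, hb⟩ := exists_lt_of_sum_lt h
  exact ⟨b, hb⟩

end Prob

section Extend

open Function

variable {ι κ V : Type*} {σ : ι → κ}

theorem Function.Injective.extend_comp_self_extend (hσ : Injective σ) (w : ι → V) (z : κ → V) :
    extend σ (z ∘ σ) (extend σ w z) = z := by
  funext c
  by_cases hc : ∃ a, σ a = c
  · obtain ⟨a, rfl⟩ := hc
    exact hσ.extend_apply _ _ a
  · simp only [extend_apply' _ _ _ hc]

noncomputable def Function.Injective.extendProdEquiv (hσ : Injective σ) :
    (ι → V) × (κ → V) ≃ (κ → V) × (ι → V) where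
  toFun p := (extend σ p.1 p.2, p.2 ∘ σ)
  invFun q := (q.1 ∘ σ, extend σ q.2 q.1)
  left_inv _ := Prod.ext (Function.extend_comp hσ _ _) (hσ.extend_comp_self_extend _ _)
  right_inv _ := Prod.ext (hσ.extend_comp_self_extend _ _) (Function.extend_comp hσ _ _)

end Extend

theorem stmt10_general {s n m : ℕ} (σ : Fin n → Fin m → Fin s)
    (hσ : ∀ j : Fin n, StrictMono (σ j))
    (f : (Fin m → Bool) → Bool)
    (G : (Fin s → Bool) → Fin n → Bool)
    (hG : ∀ (x : Fin s → Bool) (j : Fin n), G x j = f (fun a : Fin m => x (σ j a)))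
    (i : ℕ) (hi : i < n) (ε : ℝ)
    (B : (Fin i → Bool) → Bool)
    (hB : 1 / 2 + ε <
      prob (fun x : Fin s → Bool => B (bits (G x) i) = G x ⟨i, hi⟩)) :
    ∃ z : Fin s → Bool,
      1 / 2 + ε <
        prob (fun w : Fin m → Bool =>
          B (bits (G (fun c : Fin s =>
            if h : ∃ a : Fin m, σ ⟨i, hi⟩ a = c then w h.choose else z c)) i) = f w) := by
  set I : Fin n := ⟨i, hi⟩
  have hinj : Function.Injective (σ I) := (hσ I).injective
  -- `x_{w,z}` is `Function.extend`, up to the `Decidable` instance of the `dite`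
  have hsplice : ∀ (w : Fin m → Bool) (z : Fin s → Bool),
      (fun c => if h : ∃ a, σ I a = c then w h.choose else z c) = Function.extend (σ I) w z := by
    intro w z
    funext c
    unfold Function.extend
    congr
  have hGI : ∀ w z, G (Function.extend (σ I) w z) I = f w := fun w z => by
    rw [hG, ← Function.comp_def, Function.extend_comp hinj]
  rw [← prob_comp_fst (β := Fin m → Bool), ← prob_comp_equiv hinj.extendProdEquiv] at hB
  obtain ⟨z, hz⟩ := exists_lt_prob_of_lt_prob hB
  refine ⟨z, ?_⟩
  simpa only [Function.Injective.extendProdEquiv, Equiv.coe_fn_mk, hsplice, hGI] using hz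

theorem stmt10 {s n m : ℕ} (σ : Fin n → Fin m → Fin s)
    (hσ : ∀ j : Fin n, StrictMono (σ j))
    (f : (Fin m → Bool) → Bool)
    (G : (Fin s → Bool) → Fin n → Bool)
    (hG : ∀ (x : Fin s → Bool) (j : Fin n), G x j = f (fun a : Fin m => x (σ j a)))
    (i : ℕ) (hi : i < n) (ε : ℝ) (hε : 0 < ε)
    (B : (Fin i → Bool) → Bool)
    (hB : 1 / 2 + ε <
      prob (fun x : Fin s → Bool => B (bits (G x) i) = G x ⟨i, hi⟩)) :
    ∃ z : Fin s → Bool,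
      1 / 2 + ε <
        prob (fun w : Fin m → Bool =>
          B (bits (G (fun c : Fin s =>
            if h : ∃ a : Fin m, σ ⟨i, hi⟩ a = c then w h.choose else z c)) i) = f w) :=
  stmt10_general σ hσ f G hG i hi ε B hB
end

section
/- Let m, ρ, t, l ∈ ℕ, ε > 0, δ > 0, let f : {0,1}^m → {0,1}, let F : {0,1}^m × {0,1}^ρ → {0,1}, and let V ⊆ {0,1}^m be such that for every x ∈ V, |E_{R←U_ρ}[F(x,R)] − f(x)| ≤ 1/2 − 2ε. Let SAMP : {0,1}^l → ({0,1}^ρ)^t be a t-query (ρ, ε, δ)-averaging sampler with δ·|V| < 1. Then there exists y ∈ {0,1}^l such that for every x ∈ V, writing (R_1, ..., R_t) = SAMP(y), a strict majority of the values F(x,R_1), ..., F(x,R_t) equals f(x), i.e. |{k ∈ [t] : F(x,R_k) = f(x)}| > t/2. -/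
open Finset
open scoped Classical

/-- `SAMP` is a `t`-query `(ρ, ε, δ)`-averaging sampler. -/
def IsSampler {l ρ t : ℕ} (SAMP : (Fin l → Bool) → Fin t → (Fin ρ → Bool))
    (ε δ : ℝ) : Prop :=
  ∀ g : (Fin ρ → Bool) → ℝ, (∀ R, g R ∈ Set.Icc (0 : ℝ) 1) →
    1 - δ ≤ prob (fun y : Fin l → Bool =>
      |(∑ k : Fin t, g (SAMP y k)) / (t : ℝ) - Exp g| ≤ ε)

/-! Fix a seed `y` on which the sampler is accurate for every test `R ↦ F(x, R)` with `x ∈ V`;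
the sampler fails on at most a `δ`-fraction of seeds for each `x`, so by the union bound such a
seed exists once `δ·|V| < 1`. For that seed the empirical frequency of `F(x, R_k) = 1` is within
`ε + (1/2 - 2ε) < 1/2` of `f(x) ∈ {0, 1}`, which is exactly a strict majority vote for `f(x)`. -/

section UniformProbability

variable {α : Type*} [Fintype α]

lemma card_filter_not_le_of_one_sub_le_prob {p : α → Prop} {δ : ℝ} (h : 1 - δ ≤ prob p) :
    ((univ.filter fun a => ¬ p a).card : ℝ) ≤ δ * Fintype.card α := by
  have hsplit := card_filter_add_card_filter_not (s := (univ : Finset α)) p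
  rw [card_univ] at hsplit
  rcases (Fintype.card α).eq_zero_or_pos with hN | hN
  · rw [hN] at hsplit ⊢
    simp only [Nat.add_eq_zero_iff] at hsplit
    simp [hsplit.2]
  have hN' : (0 : ℝ) < Fintype.card α := by exact_mod_cast hN
  rw [prob, le_div_iff₀ hN'] at h
  have hsplit' : ((univ.filter p).card : ℝ) + (univ.filter fun a => ¬ p a).card
      = Fintype.card α := by exact_mod_cast hsplit
  linarith

lemma exists_forall_mem_of_one_sub_le_prob [Nonempty α] {ι : Type*} (s : Finset ι)
    (p : ι → α → Prop) {δ : ℝ} (hp : ∀ i ∈ s, 1 - δ ≤ prob (p i)) (hδ : δ * s.card < 1) :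
    ∃ a, ∀ i ∈ s, p i a := by
  set bad := s.biUnion fun i => univ.filter fun a => ¬ p i a
  have hN : (0 : ℝ) < Fintype.card α := by exact_mod_cast Fintype.card_pos
  have hbad : (bad.card : ℝ) < Fintype.card α :=
    calc (bad.card : ℝ) ≤ ∑ i ∈ s, ((univ.filter fun a => ¬ p i a).card : ℝ) := by
          exact_mod_cast card_biUnion_le
      _ ≤ ∑ _i ∈ s, δ * Fintype.card α :=
          sum_le_sum fun i hi => card_filter_not_le_of_one_sub_le_prob (hp i hi)
      _ = δ * s.card * Fintype.card α := by rw [sum_const, nsmul_eq_mul]; ring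
      _ < Fintype.card α := by nlinarith
  obtain ⟨a, -, ha⟩ := exists_mem_notMem_of_card_lt_card (s := bad) (t := univ)
    (by rw [card_univ]; exact_mod_cast hbad)
  refine ⟨a, fun i hi => ?_⟩
  by_contra hpa
  exact ha (mem_biUnion.2 ⟨i, hi, mem_filter.2 ⟨mem_univ a, hpa⟩⟩)

end UniformProbability

lemma bval_mem (b : Bool) : bval b ∈ Set.Icc (0 : ℝ) 1 := by
  cases b <;> simp [bval]

lemma sum_bval_eq_card_filter {ι : Type*} [Fintype ι] (b : ι → Bool) :
    ∑ k, bval (b k) = ((univ.filter fun k => b k = true).card : ℝ) := by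
  simp [bval, sum_boole]

lemma half_card_lt_card_filter_eq_of_abs_sub_lt {ι : Type*} [Fintype ι] [Nonempty ι]
    (b : ι → Bool) (c : Bool) (h : |(∑ k, bval (b k)) / Fintype.card ι - bval c| < 1 / 2) :
    (Fintype.card ι : ℝ) / 2 < ((univ.filter fun k => b k = c).card : ℝ) := by
  have hN : (0 : ℝ) < Fintype.card ι := by exact_mod_cast Fintype.card_pos
  rw [sum_bval_eq_card_filter] at h
  have hlo := (abs_lt.1 h).1
  have hhi := (abs_lt.1 h).2
  cases c with
  | true =>
    simp only [bval, if_true, lt_sub_iff_add_lt, lt_div_iff₀ hN] at hlo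
    linarith
  | false =>
    have hsplit := card_filter_add_card_filter_not (s := (univ : Finset ι)) fun k => b k = true
    simp only [Bool.not_eq_true, card_univ] at hsplit
    have hsplit' : ((univ.filter fun k => b k = true).card : ℝ)
        + (univ.filter fun k => b k = false).card = Fintype.card ι := by exact_mod_cast hsplit
    simp only [bval, Bool.false_eq_true, if_false, sub_zero, div_lt_iff₀ hN] at hhi
    linarith

lemma IsSampler.pos {l ρ t : ℕ} {SAMP : (Fin l → Bool) → Fin t → (Fin ρ → Bool)} {ε δ : ℝ}
    (hS : IsSampler SAMP ε δ) (hε : ε < 1) (hδ : δ < 1) : 0 < t := by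
  by_contra! ht
  obtain rfl : t = 0 := by omega
  have h := hS (fun _ => 1) fun _ => ⟨zero_le_one, le_rfl⟩
  have hExp : Exp (fun _ : Fin ρ → Bool => (1 : ℝ)) = 1 := by simp [Exp]
  -- With no queries the empirical average is `0 / 0 = 0`, at distance `1` from `E[1]`.
  have hnone : univ.filter (fun y : Fin l → Bool =>
      |(∑ k : Fin 0, (1 : ℝ)) / ((0 : ℕ) : ℝ) - Exp fun _ : Fin ρ → Bool => (1 : ℝ)| ≤ ε) = ∅ :=
    filter_false_of_mem fun y _ => by rw [hExp]; norm_num; linarith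
  rw [prob, hnone] at h
  simp only [card_empty, Nat.cast_zero, zero_div] at h
  linarith

theorem stmt11_general {m ρ t l : ℕ} (ε δ : ℝ) (hε : 0 < ε)
    (f : (Fin m → Bool) → Bool) (F : (Fin m → Bool) → (Fin ρ → Bool) → Bool)
    (V : Finset (Fin m → Bool))
    (hV : ∀ x ∈ V,
      |Exp (fun R : Fin ρ → Bool => bval (F x R)) - bval (f x)| ≤ 1 / 2 - 2 * ε)
    (SAMP : (Fin l → Bool) → Fin t → (Fin ρ → Bool))
    (hS : IsSampler SAMP ε δ)
    (hδV : δ * (V.card : ℝ) < 1) :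
    ∃ y : Fin l → Bool, ∀ x ∈ V,
      (t : ℝ) / 2 <
        ((Finset.univ.filter (fun k : Fin t => F x (SAMP y k) = f x)).card : ℝ) := by
  obtain ⟨y, hy⟩ := exists_forall_mem_of_one_sub_le_prob V
    (fun x y => |(∑ k, bval (F x (SAMP y k))) / (t : ℝ) - Exp fun R => bval (F x R)| ≤ ε)
    (fun x _ => hS (fun R => bval (F x R)) fun _ => bval_mem _) hδV
  refine ⟨y, fun x hx => ?_⟩
  have hε1 : ε < 1 := by linarith [hV x hx, abs_nonneg (Exp (fun R => bval (F x R)) - bval (f x))]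
  have hV1 : (1 : ℝ) ≤ V.card := by exact_mod_cast card_pos.2 ⟨x, hx⟩
  have hδ1 : δ < 1 := by nlinarith
  have : Nonempty (Fin t) := Fin.pos_iff_nonempty.1 (hS.pos hε1 hδ1)
  have hclose : |(∑ k, bval (F x (SAMP y k))) / (t : ℝ) - bval (f x)| < 1 / 2 :=
    calc _ ≤ |(∑ k, bval (F x (SAMP y k))) / (t : ℝ) - Exp fun R => bval (F x R)|
          + |(Exp fun R => bval (F x R)) - bval (f x)| := abs_sub_le _ _ _
      _ ≤ ε + (1 / 2 - 2 * ε) := add_le_add (hy x hx) (hV x hx)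
      _ < 1 / 2 := by linarith
  simpa using half_card_lt_card_filter_eq_of_abs_sub_lt (fun k => F x (SAMP y k)) (f x)
    (by simpa using hclose)

theorem stmt11 {m ρ t l : ℕ} (ε δ : ℝ) (hε : 0 < ε) (hδ : 0 < δ)
    (f : (Fin m → Bool) → Bool) (F : (Fin m → Bool) → (Fin ρ → Bool) → Bool)
    (V : Finset (Fin m → Bool))
    (hV : ∀ x ∈ V,
      |Exp (fun R : Fin ρ → Bool => bval (F x R)) - bval (f x)| ≤ 1 / 2 - 2 * ε)
    (SAMP : (Fin l → Bool) → Fin t → (Fin ρ → Bool))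
    (hS : IsSampler SAMP ε δ)
    (hδV : δ * (V.card : ℝ) < 1) :
    ∃ y : Fin l → Bool, ∀ x ∈ V,
      (t : ℝ) / 2 <
        ((Finset.univ.filter (fun k : Fin t => F x (SAMP y k) = f x)).card : ℝ) :=
  stmt11_general ε δ hε f F V hV SAMP hS hδV
end

section
/- Let B be an ordered branching program of length n and width w, and let H : {0,1}^s → {0,1}^n be an ε-hitting set generator for the class of all ordered branching programs of length n and width at most w². If u, u′ ∈ V_i are indistinguishable under H (that is, B[u, H(y)_{1..(n−i)}] = B[u′, H(y)_{1..(n−i)}] for every y ∈ {0,1}^s), then |p_{u→} − p_{u′→}| ≤ ε. -/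
open Finset
open scoped Classical

/-- `p_{v→}`: the probability of acceptance starting from state `v` in layer `i`,
over a uniformly random suffix of length `n - i`. -/
noncomputable def pAcc {n w : ℕ} (B : OBP n w) (i : ℕ) (v : Fin w) : ℝ :=
  prob (fun r : Fin (n - i) → Bool => B.label (B.walk (n - i) i v r) = true)

/-- `H` is an `ε`-hitting set generator for all OBPs of length `n` and width `W`. -/
noncomputable def IsHSG (n W s : ℕ) (H : (Fin s → Bool) → Fin n → Bool) (ε : ℝ) : Prop :=
  ∀ B' : OBP n W, ε ≤ Exp (fun x : Fin n → Bool => bval (B'.eval x)) →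
    ∃ y : Fin s → Bool, B'.eval (H y) = true

/-- States `u` and `u'` in layer `i` are indistinguishable under `H`:
they behave identically on the length-`(n-i)` prefix of every output of `H`. -/
def Indist {n w s : ℕ} (B : OBP n w) (H : (Fin s → Bool) → Fin n → Bool)
    (i : ℕ) (u u' : Fin w) : Prop :=
  ∀ y : Fin s → Bool,
    B.walk (n - i) i u (bits (H y) (n - i)) = B.walk (n - i) i u' (bits (H y) (n - i))

/-- `v_i(x)`: the state in layer `i` reached from the start
on the length-`i` prefix of `H x`. -/
def vAt {n w s : ℕ} (B : OBP n w) (H : (Fin s → Bool) → Fin n → Bool)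
    (i : ℕ) (x : Fin s → Bool) : Fin w :=
  B.reach (bits (H x) i)

/-- A state `v` in layer `i < n` is unverified if one of its successors is not
reached (in layer `i+1`) by any output of `H`. -/
def Unverified {n w s : ℕ} (B : OBP n w) (H : (Fin s → Bool) → Fin n → Bool)
    (i : ℕ) (v : Fin w) : Prop :=
  i < n ∧ ∃ b : Bool, ∀ x' : Fin s → Bool, B.next i v b ≠ vAt B H (i + 1) x'


/-!
Run two copies of `B` in lockstep from `u` and `u'` and accept when they end with different
labels: this is an OBP of width `w²`, and its acceptance probability, the probability that the
two runs disagree, bounds `|p_{u→} - p_{u'→}|`. Indistinguishability says that it rejects every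
output of `H`, so, `H` being an `ε`-HSG, its acceptance probability is below `ε`.
-/

def streamOf {k : ℕ} (x : Fin k → Bool) (t : ℕ) : Bool :=
  if h : t < k then x ⟨t, h⟩ else false

theorem streamOf_bits {n : ℕ} (x : Fin n → Bool) (k : ℕ) :
    ∀ t < k, streamOf (bits x k) t = streamOf x t := by
  intro t ht
  simp [streamOf, bits, ht]

namespace OBP

variable {n w : ℕ} (B : OBP n w)

/-- `walk` on bit streams, so that splitting a walk (`walkStream_add`) needs no casts between
`Fin` types. -/
def walkStream : ℕ → ℕ → Fin w → (ℕ → Bool) → Fin w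
  | 0, _, v, _ => v
  | k + 1, i, v, x => walkStream k (i + 1) (B.next i v (x 0)) (fun t => x (t + 1))

theorem walkStream_congr : ∀ (k i : ℕ) (v : Fin w) {x x' : ℕ → Bool},
    (∀ t < k, x t = x' t) → B.walkStream k i v x = B.walkStream k i v x'
  | 0, _, _, _, _, _ => rfl
  | k + 1, i, v, x, x', h => by
    simp only [walkStream, h 0 k.succ_pos]
    exact walkStream_congr k (i + 1) _ fun t ht => h (t + 1) (by omega)

theorem walk_eq_walkStream : ∀ (k i : ℕ) (v : Fin w) (x : Fin k → Bool),
    B.walk k i v x = B.walkStream k i v (streamOf x)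
  | 0, _, _, _ => rfl
  | k + 1, i, v, x => by
    rw [walk, walk_eq_walkStream k, walkStream]
    congr 1
    funext t
    simp [streamOf]

theorem walkStream_add : ∀ (a b i : ℕ) (v : Fin w) (x : ℕ → Bool),
    B.walkStream (a + b) i v x =
      B.walkStream b (i + a) (B.walkStream a i v x) (fun t => x (t + a))
  | 0, b, i, v, x => by simp only [Nat.zero_add, Nat.add_zero, walkStream]
  | a + 1, b, i, v, x => by
    rw [Nat.add_right_comm, walkStream, walkStream_add a b, walkStream, Nat.add_right_comm i]
    rfl

theorem walkStream_eq_self : ∀ (k i : ℕ) (v : Fin w) (x : ℕ → Bool),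
    (∀ j ≥ i, ∀ b, B.next j v b = v) → B.walkStream k i v x = v
  | 0, _, _, _, _ => rfl
  | k + 1, i, v, x, hv => by
    rw [walkStream, hv i le_rfl]
    exact walkStream_eq_self k (i + 1) v _ fun j hj => hv j (by omega)

end OBP

section Uniform

variable {α β : Type*} [Fintype α] [Fintype β]

theorem Exp_comp_equiv (e : α ≃ β) (f : β → ℝ) : Exp (fun a => f (e a)) = Exp f := by
  rw [Exp, Exp, e.sum_comp f, Fintype.card_congr e]

theorem Exp_comp_fst [Nonempty β] (f : α → ℝ) : Exp (fun p : α × β => f p.1) = Exp f := by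
  simp only [Exp, Fintype.sum_prod_type, sum_const, card_univ, nsmul_eq_mul, Fintype.card_prod,
    Nat.cast_mul]
  rw [← mul_sum, mul_comm (Fintype.card α : ℝ), mul_div_mul_left _ _ (by positivity)]

theorem abs_Exp_sub_le (f g : α → ℝ) : |Exp f - Exp g| ≤ Exp (fun a => |f a - g a|) := by
  rw [Exp, Exp, Exp, ← sub_div, ← sum_sub_distrib, abs_div, Nat.abs_cast]
  exact div_le_div_of_nonneg_right (abs_sum_le_sum_abs _ _) (Nat.cast_nonneg _)

theorem prob_eq_Exp_bval (b : α → Bool) :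
    prob (fun a => b a = true) = Exp (fun a => bval (b a)) := by
  simp only [prob, Exp, bval, sum_boole]
  congr

end Uniform

theorem abs_bval_sub_bval (a b : Bool) : |bval a - bval b| = bval (a != b) := by
  cases a <;> cases b <;> simp [bval]

theorem Exp_comp_bits {n k : ℕ} (hk : k ≤ n) (f : (Fin k → Bool) → ℝ) :
    Exp (fun x : Fin n → Bool => f (bits x k)) = Exp f := by
  let e := (Fin.appendEquiv k (n - k)).trans
    (Equiv.arrowCongr (finCongr (Nat.add_sub_cancel' hk)) (Equiv.refl Bool))
  have hbits : ∀ p, bits (e p) k = p.1 := fun p => by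
    funext j
    simp only [e, bits, dif_pos (j.2.trans_le hk)]
    exact Fin.append_left p.1 p.2 j
  calc Exp (fun x => f (bits x k))
      = Exp (fun p => f (bits (e p) k)) := (Exp_comp_equiv e _).symm
    _ = Exp (fun p : (Fin k → Bool) × (Fin (n - k) → Bool) => f p.1) := by simp only [hbits]
    _ = Exp f := Exp_comp_fst f

def pairEquiv (w : ℕ) : Fin w × Fin w ≃ Fin (w ^ 2) :=
  finProdFinEquiv.trans (finCongr (sq w).symm)

namespace OBP

variable {n w : ℕ} (B : OBP n w)

def distinguisher (i : ℕ) (u u' : Fin w) : OBP n (w ^ 2) where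
  start := pairEquiv w (u, u')
  next j p b :=
    if j < n - i then
      pairEquiv w (Prod.map (B.next (i + j) · b) (B.next (i + j) · b) ((pairEquiv w).symm p))
    else p -- only `n - i` layers of `B` are left after layer `i`
  label p := B.label ((pairEquiv w).symm p).1 != B.label ((pairEquiv w).symm p).2

theorem start_distinguisher (i : ℕ) (u u' : Fin w) :
    (B.distinguisher i u u').start = pairEquiv w (u, u') :=
  rfl

variable {B} in
theorem next_distinguisher_of_lt {i j : ℕ} (hj : j < n - i) (u u' a a' : Fin w) (b : Bool) :
    (B.distinguisher i u u').next j (pairEquiv w (a, a')) b =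
      pairEquiv w (B.next (i + j) a b, B.next (i + j) a' b) := by
  simp [distinguisher, hj]

variable {B} in
theorem next_distinguisher_of_le {i j : ℕ} (hj : n - i ≤ j) (u u' : Fin w) (p : Fin (w ^ 2))
    (b : Bool) : (B.distinguisher i u u').next j p b = p :=
  if_neg (by omega)

theorem walkStream_distinguisher (i : ℕ) (u u' : Fin w) :
    ∀ (m j : ℕ) (a a' : Fin w) (x : ℕ → Bool), j + m ≤ n - i →
      (B.distinguisher i u u').walkStream m j (pairEquiv w (a, a')) x =
        pairEquiv w (B.walkStream m (i + j) a x, B.walkStream m (i + j) a' x)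
  | 0, _, _, _, _, _ => rfl
  | m + 1, j, a, a', x, h => by
    rw [walkStream, next_distinguisher_of_lt (by omega)]
    exact walkStream_distinguisher i u u' m (j + 1) _ _ _ (by omega)

theorem eval_distinguisher (i : ℕ) (u u' : Fin w) (x : Fin n → Bool) :
    (B.distinguisher i u u').eval x =
      (B.label (B.walk (n - i) i u (bits x (n - i))) !=
        B.label (B.walk (n - i) i u' (bits x (n - i)))) := by
  have hsplit := (B.distinguisher i u u').walkStream_add (n - i) (n - (n - i)) 0
    (pairEquiv w (u, u')) (streamOf x)
  rw [Nat.add_sub_cancel' (n.sub_le i)] at hsplit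
  rw [eval, reach, walk_eq_walkStream, start_distinguisher, hsplit,
    walkStream_eq_self _ _ _ _ _ fun j hj b => next_distinguisher_of_le (by omega) u u' _ b,
    walkStream_distinguisher B i u u' _ 0 u u' _ (by omega), walk_eq_walkStream,
    walk_eq_walkStream, B.walkStream_congr _ _ u (streamOf_bits x _),
    B.walkStream_congr _ _ u' (streamOf_bits x _)]
  simp [distinguisher]

theorem abs_pAcc_sub_le_Exp_distinguisher (i : ℕ) (u u' : Fin w) :
    |pAcc B i u - pAcc B i u'| ≤ Exp (fun x => bval ((B.distinguisher i u u').eval x)) :=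
  calc |pAcc B i u - pAcc B i u'|
      ≤ Exp (fun r : Fin (n - i) → Bool =>
          bval (B.label (B.walk (n - i) i u r) != B.label (B.walk (n - i) i u' r))) := by
        rw [pAcc, pAcc, prob_eq_Exp_bval, prob_eq_Exp_bval]
        refine (abs_Exp_sub_le _ _).trans_eq ?_
        simp only [abs_bval_sub_bval]
    _ = _ := by
        rw [← Exp_comp_bits (n.sub_le i)]
        simp only [eval_distinguisher]

end OBP

theorem stmt12_general {n w s : ℕ} (B : OBP n w) (ε : ℝ)
    (H : (Fin s → Bool) → Fin n → Bool) (hH : IsHSG n (w ^ 2) s H ε)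
    (i : ℕ) (u u' : Fin w) (hind : Indist B H i u u') :
    |pAcc B i u - pAcc B i u'| ≤ ε := by
  have hmiss : ∀ y, (B.distinguisher i u u').eval (H y) = false := fun y => by
    simp [OBP.eval_distinguisher, hind y]
  have hsmall : Exp (fun x => bval ((B.distinguisher i u u').eval x)) < ε := by
    by_contra! hlarge
    obtain ⟨y, hy⟩ := hH _ hlarge
    simp [hmiss y] at hy
  exact (B.abs_pAcc_sub_le_Exp_distinguisher i u u').trans hsmall.le

theorem stmt12 {n w s : ℕ} (B : OBP n w) (ε : ℝ)
    (H : (Fin s → Bool) → Fin n → Bool) (hH : IsHSG n (w ^ 2) s H ε)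
    (i : ℕ) (hi : i ≤ n) (u u' : Fin w) (hind : Indist B H i u u') :
    |pAcc B i u - pAcc B i u'| ≤ ε :=
  stmt12_general B ε H hH i u u' hind
end

section
/- Let B be an ordered branching program of length n and width w, and let H : {0,1}^s → {0,1}^n be an ε-hitting set generator for the class of all ordered branching programs of length n and width at most w+1. Then Pr_{x←U_n}[ the path v_st = B[v_st, x_{1..0}], B[v_st, x_{1..1}], ..., B[v_st, x_{1..n}] visits an unverified state ] < 2ε. -/
open Finset
open scoped Classical

/-!
Add to `B` an accepting sink and redirect to it every missed edge, i.e. an edge out of an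
unverified state that no output of `H` follows. The resulting width-`(w+1)` program never accepts an output
of `H`, so it accepts with probability `< ε`. Conversely, if a path visits an unverified state,
first at layer `k`, then the path or the path with bit `k` flipped takes the missed edge at
layer `k`; flipping bit `k` does not change the first unverified layer, so this pairs up inputs
and at least half of the inputs that visit an unverified state are accepted.
-/

namespace OBP

variable {n w : ℕ}

lemma walk_succ_last (B : OBP n w) (k i : ℕ) (v : Fin w) (x : Fin (k + 1) → Bool) :
    B.walk (k + 1) i v x
      = B.next (i + k) (B.walk k i v (fun j => x j.castSucc)) (x (Fin.last k)) := by
  induction k generalizing i v with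
  | zero => rfl
  | succ k ih =>
    rw [walk, ih, Nat.add_right_comm, Nat.add_assoc]
    rfl

lemma reach_bits_succ (B : OBP n w) (x : Fin n → Bool) {i : ℕ} (h : i < n) :
    B.reach (bits x (i + 1)) = B.next i (B.reach (bits x i)) (x ⟨i, h⟩) := by
  rw [reach, walk_succ_last, Nat.zero_add]
  simp only [bits, Fin.val_castSucc, Fin.val_last, dif_pos h]
  rfl

end OBP

lemma prob_le_two_mul_prob {α : Type*} [Fintype α] {p q : α → Prop} (φ : α → α)
    (hφ : ∀ x, p x → φ (φ x) = x) (hpq : ∀ x, p x → q x ∨ q (φ x)) :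
    prob p ≤ 2 * prob q := by
  have hsub : univ.filter p ⊆ univ.filter q ∪ (univ.filter q).image φ := by
    intro x hx
    have hx := (mem_filter.1 hx).2
    rcases hpq x hx with hq | hq
    · exact mem_union_left _ (by simpa using hq)
    · exact mem_union_right _ (mem_image.2 ⟨φ x, by simpa using hq, hφ x hx⟩)
  have hcard : (univ.filter p).card ≤ 2 * (univ.filter q).card :=
    calc (univ.filter p).card
        ≤ (univ.filter q).card + ((univ.filter q).image φ).card :=
          (card_le_card hsub).trans (card_union_le _ _)
      _ ≤ 2 * (univ.filter q).card := by linarith [card_image_le (s := univ.filter q) (f := φ)]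
  rw [prob, prob, mul_div_assoc']
  gcongr
  exact_mod_cast hcard

lemma Exp_bval {α : Type*} [Fintype α] (g : α → Bool) :
    Exp (fun x => bval (g x)) = prob (fun x => g x = true) := by
  rw [Exp, prob]
  congr 1
  simp only [bval, sum_boole, Nat.cast_inj]
  congr

section Detector

variable {n w s : ℕ} (B : OBP n w) (H : (Fin s → Bool) → Fin n → Bool)

noncomputable def missedBit (i : ℕ) (v : Fin w) : Bool :=
  if h : ∃ b : Bool, ∀ x' : Fin s → Bool, B.next i v b ≠ vAt B H (i + 1) x' then h.choose
  else false

lemma next_missedBit_ne {i : ℕ} {v : Fin w} (hv : Unverified B H i v)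
    (y : Fin s → Bool) : B.next i v (missedBit B H i v) ≠ vAt B H (i + 1) y := by
  rw [missedBit, dif_pos hv.2]
  exact hv.2.choose_spec y

def TakesMissedEdge (x : Fin n → Bool) (i : ℕ) : Prop :=
  ∃ h : i < n, Unverified B H i (B.reach (bits x i)) ∧
    x ⟨i, h⟩ = missedBit B H i (B.reach (bits x i))

noncomputable def detector : OBP n (w + 1) where
  start := B.start.castSucc
  next i v b := Fin.lastCases (Fin.last w)
    (fun u => if Unverified B H i u ∧ b = missedBit B H i u then Fin.last w
      else (B.next i u b).castSucc) v
  label v := decide (v = Fin.last w)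

lemma detector_reach_bits (x : Fin n → Bool) {j : ℕ} (hj : j ≤ n) :
    (detector B H).reach (bits x j) =
      if ∃ i < j, TakesMissedEdge B H x i then Fin.last w
      else (B.reach (bits x j)).castSucc := by
  induction j with
  | zero => simp [OBP.reach, OBP.walk, detector]
  | succ j ih =>
    have hjn : j < n := by omega
    rw [OBP.reach_bits_succ _ x hjn, ih hjn.le, OBP.reach_bits_succ B x hjn]
    by_cases hpast : ∃ i < j, TakesMissedEdge B H x i
    · obtain ⟨i, hij, hi⟩ := hpast
      rw [if_pos ⟨i, hij, hi⟩, if_pos ⟨i, by omega, hi⟩]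
      simp [detector]
    · have hnow : (∃ i < j + 1, TakesMissedEdge B H x i) ↔ TakesMissedEdge B H x j := by
        refine ⟨fun ⟨i, hij, hi⟩ => ?_, fun h => ⟨j, by omega, h⟩⟩
        rcases Nat.lt_succ_iff_lt_or_eq.1 hij with hij | rfl
        · exact absurd ⟨i, hij, hi⟩ hpast
        · exact hi
      have htakes : (Unverified B H j (B.reach (bits x j)) ∧
          x ⟨j, hjn⟩ = missedBit B H j (B.reach (bits x j))) ↔ TakesMissedEdge B H x j :=
        ⟨fun h => ⟨hjn, h⟩, fun ⟨_, h⟩ => h⟩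
      rw [if_neg hpast]
      simp only [hnow, detector, Fin.lastCases_castSucc, htakes]

lemma detector_eval_eq_true_iff (x : Fin n → Bool) :
    (detector B H).eval x = true ↔ ∃ i, TakesMissedEdge B H x i := by
  have hreach := detector_reach_bits B H x le_rfl
  rw [bits_self] at hreach
  rw [OBP.eval, hreach]
  split_ifs with h
  · simpa [detector] using h.imp fun i hi => hi.2
  · simp only [detector, decide_eq_true_eq, Fin.castSucc_ne_last, false_iff]
    exact fun ⟨i, hi⟩ => h ⟨i, hi.1, hi⟩

lemma not_takesMissedEdge_output (y : Fin s → Bool) (i : ℕ) : ¬TakesMissedEdge B H (H y) i := by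
  rintro ⟨h, hv, hb⟩
  apply next_missedBit_ne B H hv y
  rw [← hb, ← OBP.reach_bits_succ]
  rfl

lemma prob_detector_accepts_lt {ε : ℝ} (hH : IsHSG n (w + 1) s H ε) :
    prob (fun x => (detector B H).eval x = true) < ε := by
  rw [← Exp_bval]
  by_contra! hge
  obtain ⟨y, hy⟩ := hH (detector B H) hge
  exact not_takesMissedEdge_output B H y _ ((detector_eval_eq_true_iff B H _).1 hy).choose_spec

end Detector

def flipAt {n : ℕ} (x : Fin n → Bool) (k : ℕ) : Fin n → Bool :=
  fun j => if (j : ℕ) = k then !x j else x j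

lemma flipAt_flipAt {n : ℕ} (x : Fin n → Bool) (k : ℕ) : flipAt (flipAt x k) k = x := by
  funext j
  by_cases h : (j : ℕ) = k <;> simp [flipAt, h]

lemma bits_flipAt_of_le {n : ℕ} (x : Fin n → Bool) {j k : ℕ} (hjk : j ≤ k) :
    bits (flipAt x k) j = bits x j := by
  funext m
  have : (m : ℕ) ≠ k := by omega
  simp [bits, flipAt, this]

section FirstUnverified

variable {n w s : ℕ} (B : OBP n w) (H : (Fin s → Bool) → Fin n → Bool)

noncomputable def firstUnverified (x : Fin n → Bool) : ℕ :=
  sInf {i | Unverified B H i (B.reach (bits x i))}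

variable {B H}

lemma unverified_firstUnverified {x : Fin n → Bool}
    (hx : ∃ i, Unverified B H i (B.reach (bits x i))) :
    Unverified B H (firstUnverified B H x) (B.reach (bits x (firstUnverified B H x))) :=
  Nat.sInf_mem hx

lemma firstUnverified_eq_of_bits_eq {x z : Fin n → Bool}
    (hx : ∃ i, Unverified B H i (B.reach (bits x i)))
    (hzx : ∀ j ≤ firstUnverified B H x, bits z j = bits x j) :
    firstUnverified B H z = firstUnverified B H x := by
  have hz : Unverified B H (firstUnverified B H x) (B.reach (bits z (firstUnverified B H x))) := by
    rw [hzx _ le_rfl]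
    exact unverified_firstUnverified hx
  refine le_antisymm (Nat.sInf_le hz) ?_
  have hle : firstUnverified B H z ≤ firstUnverified B H x := Nat.sInf_le hz
  have hzmin := unverified_firstUnverified ⟨_, hz⟩
  rw [hzx _ hle] at hzmin
  exact Nat.sInf_le hzmin

variable (B H)

noncomputable def flipFirstUnverified (x : Fin n → Bool) : Fin n → Bool :=
  flipAt x (firstUnverified B H x)

variable {B H}

lemma flipFirstUnverified_flipFirstUnverified {x : Fin n → Bool}
    (hx : ∃ i, Unverified B H i (B.reach (bits x i))) :
    flipFirstUnverified B H (flipFirstUnverified B H x) = x := by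
  have hfirst : firstUnverified B H (flipFirstUnverified B H x) = firstUnverified B H x :=
    firstUnverified_eq_of_bits_eq hx fun _ hj => bits_flipAt_of_le x hj
  rw [flipFirstUnverified, hfirst, flipFirstUnverified, flipAt_flipAt]

lemma takesMissedEdge_or_flipFirstUnverified {x : Fin n → Bool}
    (hx : ∃ i, Unverified B H i (B.reach (bits x i))) :
    TakesMissedEdge B H x (firstUnverified B H x) ∨
      TakesMissedEdge B H (flipFirstUnverified B H x) (firstUnverified B H x) := by
  set k := firstUnverified B H x
  have hk : Unverified B H k (B.reach (bits x k)) := unverified_firstUnverified hx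
  by_cases hb : x ⟨k, hk.1⟩ = missedBit B H k (B.reach (bits x k))
  · exact Or.inl ⟨hk.1, hk, hb⟩
  · refine Or.inr ⟨hk.1, ?_⟩
    rw [flipFirstUnverified, bits_flipAt_of_le x le_rfl]
    refine ⟨hk, ?_⟩
    simpa [flipAt, k, Bool.eq_not] using hb

end FirstUnverified

theorem stmt14 {n w s : ℕ} (B : OBP n w) (ε : ℝ)
    (H : (Fin s → Bool) → Fin n → Bool) (hH : IsHSG n (w + 1) s H ε) :
    prob (fun x : Fin n → Bool =>
      ∃ i : ℕ, Unverified B H i (B.reach (bits x i))) < 2 * ε := by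
  have hpair : ∀ x, (∃ i, Unverified B H i (B.reach (bits x i))) →
      (detector B H).eval x = true ∨ (detector B H).eval (flipFirstUnverified B H x) = true :=
    fun x hx => (takesMissedEdge_or_flipFirstUnverified hx).imp
      (fun h => (detector_eval_eq_true_iff B H _).2 ⟨_, h⟩)
      (fun h => (detector_eval_eq_true_iff B H _).2 ⟨_, h⟩)
  calc prob (fun x : Fin n → Bool => ∃ i : ℕ, Unverified B H i (B.reach (bits x i)))
      ≤ 2 * prob (fun x => (detector B H).eval x = true) :=
        prob_le_two_mul_prob _ (fun _ hx => flipFirstUnverified_flipFirstUnverified hx) hpair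
    _ < 2 * ε := by linarith [prob_detector_accepts_lt B H hH]
end
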